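/- arXiv:0808.3838 — 11 statements merged into one kernel-verified Lean document; each statement's English description precedes it below -/
import Mathlib

section
/- Let n ≥ 2 be an integer, a > 0, and let f be a positive, twice differentiable real-valued function on an interval I containing 0 satisfying f''(t) = (n−1)·coth(f(t))·(1+f'(t)²) for all t ∈ I, with f(0) = a and f'(0) = 0. Then for all t ∈ I one has sinh^{n−1}(f(t)) = sinh^{n−1}(a)·(1+f'(t)²)^{1/2}; in particular f(t) ≥ a for all t ∈ I. -/
open MeasureTheory

/-- conservation law for the catenoid ODE
`f'' = (n-1) coth(f) (1 + f'^2)`, `f(0) = a`, `f'(0) = 0` on an interval `I` containing `0`: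
`sinh^{n-1}(f t) = sinh^{n-1}(a) * (1 + f'(t)^2)^{1/2}`, and in particular `f t ≥ a`. -/
theorem stmt_0 (n : ℕ) (hn : 2 ≤ n) (a : ℝ) (ha : 0 < a)
    (I : Set ℝ) (hI : I.OrdConnected) (h0 : (0 : ℝ) ∈ I)
    (f f' : ℝ → ℝ)
    (hfpos : ∀ t ∈ I, 0 < f t)
    (hf' : ∀ t ∈ I, HasDerivWithinAt f (f' t) I t)
    (hf'' : ∀ t ∈ I,
      HasDerivWithinAt f'
        (((n : ℝ) - 1) * (Real.cosh (f t) / Real.sinh (f t)) * (1 + f' t ^ 2)) I t)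
    (hfa : f 0 = a) (hf'0 : f' 0 = 0) :
    ∀ t ∈ I,
      Real.sinh (f t) ^ (n - 1) = Real.sinh a ^ (n - 1) * Real.sqrt (1 + f' t ^ 2) ∧
      a ≤ f t := by
  have hconv : Convex ℝ I := hI.convex
  set F : ℝ → ℝ :=
    fun t => ((n : ℝ) - 1) * Real.log (Real.sinh (f t)) - Real.log (1 + f' t ^ 2) / 2 with hF
  have hsinhpos : ∀ t ∈ I, 0 < Real.sinh (f t) := fun t ht =>
    Real.sinh_pos_iff.2 (hfpos t ht)
  have hqpos : ∀ t : ℝ, (0 : ℝ) < 1 + f' t ^ 2 := fun t => by positivity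
  -- F has zero derivative on I
  have hFderiv : ∀ t ∈ I, HasDerivWithinAt F 0 I t := by
    intro t ht
    have hsne : Real.sinh (f t) ≠ 0 := (hsinhpos t ht).ne'
    have hqne : (1 + f' t ^ 2) ≠ 0 := (hqpos t).ne'
    have h1 : HasDerivWithinAt (fun s => ((n : ℝ) - 1) * Real.log (Real.sinh (f s)))
        (((n : ℝ) - 1) * (Real.cosh (f t) * f' t / Real.sinh (f t))) I t :=
      (((hf' t ht).sinh).log hsne).const_mul _
    have h2 : HasDerivWithinAt (fun s => Real.log (1 + f' s ^ 2) / 2)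
        (((2 : ℕ) * f' t ^ (2 - 1) *
          (((n : ℝ) - 1) * (Real.cosh (f t) / Real.sinh (f t)) * (1 + f' t ^ 2)))
          / (1 + f' t ^ 2) / 2) I t :=
      ((((hf'' t ht).pow 2).const_add 1).log hqne).div_const 2
    have h3 := h1.sub h2
    have heq : ((n : ℝ) - 1) * (Real.cosh (f t) * f' t / Real.sinh (f t)) -
        ((2 : ℕ) * f' t ^ (2 - 1) *
          (((n : ℝ) - 1) * (Real.cosh (f t) / Real.sinh (f t)) * (1 + f' t ^ 2)))
          / (1 + f' t ^ 2) / 2 = 0 := by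
      field_simp
      ring
    rw [heq] at h3
    exact h3
  -- F is constant on I
  have hFconst : ∀ t ∈ I, F t = F 0 := by
    intro t ht
    have := hconv.norm_image_sub_le_of_norm_hasDerivWithin_le
      (C := 0) (f' := fun _ => (0 : ℝ)) hFderiv (fun x _ => by simp [le_refl]) h0 ht
    have h2 : ‖F t - F 0‖ ≤ 0 := by simpa using this
    have h3 : F t - F 0 = 0 := norm_le_zero_iff.1 h2
    linarith
  intro t ht
  have hsa : 0 < Real.sinh a := Real.sinh_pos_iff.2 ha
  have hst : 0 < Real.sinh (f t) := hsinhpos t ht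
  have hq : (0 : ℝ) < 1 + f' t ^ 2 := hqpos t
  have hFt := hFconst t ht
  have hF0 : F 0 = ((n : ℝ) - 1) * Real.log (Real.sinh a) := by
    simp [hF, hfa, hf'0]
  rw [hF0] at hFt
  have hcast : ((n - 1 : ℕ) : ℝ) = (n : ℝ) - 1 := by
    have : 1 ≤ n := le_trans (by norm_num) hn
    push_cast [this]; ring
  have key : Real.sinh (f t) ^ (n - 1) = Real.sinh a ^ (n - 1) * Real.sqrt (1 + f' t ^ 2) := by
    have e1 : Real.sinh (f t) ^ (n - 1) =
        Real.exp (((n : ℝ) - 1) * Real.log (Real.sinh (f t))) := by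
      rw [← Real.rpow_natCast _ (n - 1), hcast, Real.rpow_def_of_pos hst]
      ring_nf
    have e2 : Real.sinh a ^ (n - 1) = Real.exp (((n : ℝ) - 1) * Real.log (Real.sinh a)) := by
      rw [← Real.rpow_natCast _ (n - 1), hcast, Real.rpow_def_of_pos hsa]
      ring_nf
    have e3 : Real.sqrt (1 + f' t ^ 2) = Real.exp (Real.log (1 + f' t ^ 2) / 2) := by
      rw [Real.sqrt_eq_rpow, Real.rpow_def_of_pos hq]
      ring_nf
    rw [e1, e2, e3, ← Real.exp_add]
    congr 1
    have := hFt
    simp only [hF] at this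
    linarith
  refine ⟨key, ?_⟩
  have hsq : (1 : ℝ) ≤ Real.sqrt (1 + f' t ^ 2) := by
    nlinarith [Real.sq_sqrt hq.le, Real.sqrt_nonneg (1 + f' t ^ 2), sq_nonneg (f' t),
      sq_nonneg (Real.sqrt (1 + f' t ^ 2) - 1)]
  have hle : Real.sinh a ^ (n - 1) ≤ Real.sinh (f t) ^ (n - 1) := by
    calc Real.sinh a ^ (n - 1) = Real.sinh a ^ (n - 1) * 1 := by ring
    _ ≤ Real.sinh a ^ (n - 1) * Real.sqrt (1 + f' t ^ 2) := by
        apply mul_le_mul_of_nonneg_left hsq (by positivity)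
    _ = Real.sinh (f t) ^ (n - 1) := key.symm
  have hne : n - 1 ≠ 0 := by omega
  have : Real.sinh a ≤ Real.sinh (f t) :=
    (pow_le_pow_iff_left₀ hsa.le hst.le hne).1 hle
  exact Real.sinh_le_sinh.1 this
end

section
/- Let n ≥ 2 be an integer, a > 0, T > 0, and let f be a positive, twice differentiable real-valued function on [0, T) satisfying f''(t) = (n−1)·coth(f(t))·(1+f'(t)²) for all t, with f(0) = a and f'(0) = 0. Then for every t ∈ [0, T) one has λ(a, f(t)) = t, i.e. sinh^{n−1}(a) · ∫_a^{f(t)} (sinh^{2n−2}(u) − sinh^{2n−2}(a))^{−1/2} du = t. -/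
/-!
Write `k = n - 1`. Along a solution, `sinh (f t) ^ (2k) / (1 + f' t ^ 2)` is a first integral of
`f'' = k coth f (1 + f'^2)`, hence `sinh (f t) ^ (2k) - sinh a ^ (2k) = (sinh a ^ k * f' t) ^ 2`.
As `f'' > 0` and `f' 0 = 0`, `f` is strictly increasing, so it maps `(0, t)` onto `(a, f t)`;
under this change of variables the integrand of `λ` becomes
`f' / (sinh a ^ k * f') = 1 / sinh a ^ k`, which integrates to `t / sinh a ^ k`.
The change of variables formula for injective differentiable maps needs no integrability
of the singular integrand to be established beforehand.
-/

open MeasureTheory Real Set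

lemma Convex.eq_of_hasDerivWithinAt_zero {s : Set ℝ} {g : ℝ → ℝ} (hs : Convex ℝ s)
    (hg : ∀ x ∈ s, HasDerivWithinAt g 0 s x) {x y : ℝ} (hx : x ∈ s) (hy : y ∈ s) :
    g x = g y := by
  have := hs.norm_image_sub_le_of_norm_hasDerivWithin_le hg (fun _ _ => norm_zero.le) hy hx
  simpa [sub_eq_zero] using this

lemma strictMonoOn_of_hasDerivWithinAt_pos' {D : Set ℝ} {g g' : ℝ → ℝ} (hD : Convex ℝ D)
    (hg : ∀ x ∈ D, HasDerivWithinAt g (g' x) D x) (hg' : ∀ x ∈ interior D, 0 < g' x) :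
    StrictMonoOn g D :=
  strictMonoOn_of_hasDerivWithinAt_pos hD (fun x hx => (hg x hx).continuousWithinAt)
    (fun x hx => (hg x (interior_subset hx)).mono interior_subset) hg'

/-- With `k = n - 1` this is the catenoid equation in `ℍⁿ × ℝ`. -/
structure IsCatenoidSolution (k : ℕ) (T : ℝ) (f f' : ℝ → ℝ) : Prop where
  pos : ∀ t ∈ Ico 0 T, 0 < f t
  hasDerivWithinAt : ∀ t ∈ Ico 0 T, HasDerivWithinAt f (f' t) (Ico 0 T) t
  hasDerivWithinAt_deriv : ∀ t ∈ Ico 0 T,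
    HasDerivWithinAt f' (k * (cosh (f t) / sinh (f t)) * (1 + f' t ^ 2)) (Ico 0 T) t

noncomputable def catenoidEnergy (k : ℕ) (f f' : ℝ → ℝ) (t : ℝ) : ℝ :=
  sinh (f t) ^ (2 * k) / (1 + f' t ^ 2)

namespace IsCatenoidSolution

variable {k : ℕ} {T : ℝ} {f f' : ℝ → ℝ}

lemma strictMonoOn_deriv (h : IsCatenoidSolution k T f f') (hk : 0 < k) :
    StrictMonoOn f' (Ico 0 T) :=
  strictMonoOn_of_hasDerivWithinAt_pos' (convex_Ico 0 T) h.hasDerivWithinAt_deriv fun t ht => by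
    have := sinh_pos_iff.mpr (h.pos t (interior_subset ht))
    have := cosh_pos (f t)
    positivity

lemma deriv_pos (h : IsCatenoidSolution k T f f') (hk : 0 < k) (h0 : f' 0 = 0) {t : ℝ}
    (ht : t ∈ Ioo 0 T) : 0 < f' t :=
  h0 ▸ h.strictMonoOn_deriv hk ⟨le_rfl, ht.1.trans ht.2⟩ (Ioo_subset_Ico_self ht) ht.1

lemma deriv_nonneg (h : IsCatenoidSolution k T f f') (hk : 0 < k) (h0 : f' 0 = 0) {t : ℝ}
    (ht : t ∈ Ico 0 T) : 0 ≤ f' t := by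
  rcases ht.1.eq_or_lt with rfl | ht0
  · exact h0.ge
  · exact (h.deriv_pos hk h0 ⟨ht0, ht.2⟩).le

lemma strictMonoOn (h : IsCatenoidSolution k T f f') (hk : 0 < k) (h0 : f' 0 = 0) :
    StrictMonoOn f (Ico 0 T) :=
  strictMonoOn_of_hasDerivWithinAt_pos' (convex_Ico 0 T) h.hasDerivWithinAt fun t ht =>
    h.deriv_pos hk h0 (by rwa [interior_Ico] at ht)

lemma hasDerivWithinAt_catenoidEnergy (h : IsCatenoidSolution k T f f') {t : ℝ}
    (ht : t ∈ Ico 0 T) : HasDerivWithinAt (catenoidEnergy k f f') 0 (Ico 0 T) t := by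
  have hsinh : sinh (f t) ≠ 0 := (sinh_pos_iff.mpr (h.pos t ht)).ne'
  have hnum : HasDerivWithinAt (fun x => sinh (f x) ^ (2 * k))
      (2 * k * sinh (f t) ^ (2 * k - 1) * (cosh (f t) * f' t)) (Ico 0 T) t := by
    simpa using (h.hasDerivWithinAt t ht).sinh.fun_pow (2 * k)
  have hden : HasDerivWithinAt (fun x => 1 + f' x ^ 2)
      (2 * f' t * (k * (cosh (f t) / sinh (f t)) * (1 + f' t ^ 2))) (Ico 0 T) t := by
    simpa using ((h.hasDerivWithinAt_deriv t ht).fun_pow 2).const_add 1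
  refine (hnum.div hden (by positivity)).congr_deriv ?_
  rcases k with _ | k
  · simp
  · rw [show 2 * (k + 1) - 1 = 2 * k + 1 by omega, show 2 * (k + 1) = 2 * k + 1 + 1 by omega]
    field_simp
    push_cast
    ring

lemma catenoidEnergy_eq (h : IsCatenoidSolution k T f f') {t : ℝ} (ht : t ∈ Ico 0 T) :
    catenoidEnergy k f f' t = catenoidEnergy k f f' 0 :=
  (convex_Ico 0 T).eq_of_hasDerivWithinAt_zero
    (fun _ hx => h.hasDerivWithinAt_catenoidEnergy hx) ht ⟨le_rfl, ht.1.trans_lt ht.2⟩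

lemma sqrt_sinh_pow_sub_sinh_pow (h : IsCatenoidSolution k T f f') (hk : 0 < k)
    (h0 : f' 0 = 0) {t : ℝ} (ht : t ∈ Ico 0 T) :
    √(sinh (f t) ^ (2 * k) - sinh (f 0) ^ (2 * k)) = sinh (f 0) ^ k * f' t := by
  have hsinh : 0 < sinh (f 0) := sinh_pos_iff.mpr (h.pos 0 ⟨le_rfl, ht.1.trans_lt ht.2⟩)
  have henergy := h.catenoidEnergy_eq ht
  simp only [catenoidEnergy, h0] at henergy
  rw [div_eq_iff (by positivity)] at henergy
  rw [henergy, ← sqrt_sq (mul_nonneg (by positivity) (h.deriv_nonneg hk h0 ht))]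
  congr 1
  ring

lemma abs_deriv_mul_integrand (h : IsCatenoidSolution k T f f') (hk : 0 < k) (h0 : f' 0 = 0)
    {t : ℝ} (ht : t ∈ Ioo 0 T) :
    |f' t| * (1 / √(sinh (f t) ^ (2 * k) - sinh (f 0) ^ (2 * k))) = 1 / sinh (f 0) ^ k := by
  have hf't := h.deriv_pos hk h0 ht
  rw [h.sqrt_sinh_pow_sub_sinh_pow hk h0 (Ioo_subset_Ico_self ht), abs_of_pos hf't]
  field_simp

lemma sinh_pow_mul_integral (h : IsCatenoidSolution k T f f') (hk : 0 < k) (h0 : f' 0 = 0)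
    {t : ℝ} (ht : t ∈ Ico 0 T) :
    sinh (f 0) ^ k * ∫ u in f 0..f t, 1 / √(sinh u ^ (2 * k) - sinh (f 0) ^ (2 * k)) = t := by
  have hsub : Icc 0 t ⊆ Ico 0 T := Icc_subset_Ico_right ht.2
  have hmono : StrictMonoOn f (Icc 0 t) := (h.strictMonoOn hk h0).mono hsub
  have himage : f '' Ioo 0 t = Ioo (f 0) (f t) :=
    ContinuousOn.image_Ioo_of_strictMonoOn ht.1
      (fun x hx => (h.hasDerivWithinAt x (hsub hx)).continuousWithinAt.mono hsub) hmono
  have hderiv : ∀ x ∈ Ioo 0 t, HasDerivWithinAt f (f' x) (Ioo 0 t) x := fun x hx =>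
    (h.hasDerivWithinAt x (hsub (Ioo_subset_Icc_self hx))).mono
      (Ioo_subset_Icc_self.trans hsub)
  have hsinh : 0 < sinh (f 0) := sinh_pos_iff.mpr (h.pos 0 ⟨le_rfl, ht.1.trans_lt ht.2⟩)
  rw [intervalIntegral.integral_of_le (hmono.monotoneOn ⟨le_rfl, ht.1⟩ ⟨ht.1, le_rfl⟩ ht.1),
    integral_Ioc_eq_integral_Ioo, ← himage,
    integral_image_eq_integral_abs_deriv_smul measurableSet_Ioo hderiv
      (hmono.injOn.mono Ioo_subset_Icc_self)]
  simp only [smul_eq_mul]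
  rw [setIntegral_congr_fun measurableSet_Ioo fun x hx =>
      h.abs_deriv_mul_integrand hk h0 ⟨hx.1, hx.2.trans ht.2⟩]
  simp only [setIntegral_const, measureReal_def, Real.volume_Ioo, sub_zero,
    ENNReal.toReal_ofReal ht.1, smul_eq_mul]
  field_simp

end IsCatenoidSolution

theorem stmt_3_general (n : ℕ) (hn : 2 ≤ n) (a : ℝ) (T : ℝ)
    (f f' : ℝ → ℝ)
    (hfpos : ∀ t ∈ Set.Ico (0 : ℝ) T, 0 < f t)
    (hf' : ∀ t ∈ Set.Ico (0 : ℝ) T, HasDerivWithinAt f (f' t) (Set.Ico (0 : ℝ) T) t)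
    (hf'' : ∀ t ∈ Set.Ico (0 : ℝ) T,
      HasDerivWithinAt f'
        (((n : ℝ) - 1) * (Real.cosh (f t) / Real.sinh (f t)) * (1 + f' t ^ 2))
        (Set.Ico (0 : ℝ) T) t)
    (hfa : f 0 = a) (hf'0 : f' 0 = 0) :
    ∀ t ∈ Set.Ico (0 : ℝ) T,
      Real.sinh a ^ (n - 1) *
        ∫ u in a..(f t),
          1 / Real.sqrt (Real.sinh u ^ (2 * n - 2) - Real.sinh a ^ (2 * n - 2)) = t := by
  have hcoeff : ((n - 1 : ℕ) : ℝ) = (n : ℝ) - 1 := Nat.cast_pred (by omega)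
  have h : IsCatenoidSolution (n - 1) T f f' := ⟨hfpos, hf', by simpa only [hcoeff] using hf''⟩
  intro t ht
  rw [show 2 * n - 2 = 2 * (n - 1) by omega, ← hfa]
  exact h.sinh_pow_mul_integral (by omega) hf'0 ht

/-- if `f` solves the catenoid ODE `f'' = (n-1) coth(f) (1 + f'^2)` on `[0, T)`
with `f(0) = a > 0`, `f'(0) = 0`, then `λ(a, f(t)) = t` for all `t ∈ [0, T)`, where
`λ(a, ρ) = sinh^{n-1}(a) ∫_a^ρ (sinh^{2n-2}(u) - sinh^{2n-2}(a))^{-1/2} du`. -/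
theorem stmt_3 (n : ℕ) (hn : 2 ≤ n) (a : ℝ) (ha : 0 < a) (T : ℝ) (hT : 0 < T)
    (f f' : ℝ → ℝ)
    (hfpos : ∀ t ∈ Set.Ico (0 : ℝ) T, 0 < f t)
    (hf' : ∀ t ∈ Set.Ico (0 : ℝ) T, HasDerivWithinAt f (f' t) (Set.Ico (0 : ℝ) T) t)
    (hf'' : ∀ t ∈ Set.Ico (0 : ℝ) T,
      HasDerivWithinAt f'
        (((n : ℝ) - 1) * (Real.cosh (f t) / Real.sinh (f t)) * (1 + f' t ^ 2))
        (Set.Ico (0 : ℝ) T) t)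
    (hfa : f 0 = a) (hf'0 : f' 0 = 0) :
    ∀ t ∈ Set.Ico (0 : ℝ) T,
      Real.sinh a ^ (n - 1) *
        ∫ u in a..(f t),
          1 / Real.sqrt (Real.sinh u ^ (2 * n - 2) - Real.sinh a ^ (2 * n - 2)) = t :=
  stmt_3_general n hn a T f f' hfpos hf' hf'' hfa hf'0
end

section
/- Let n ≥ 2 be an integer and a > 0, and set T(a) = sinh^{n−1}(a) · ∫_a^∞ (sinh^{2n−2}(u) − sinh^{2n−2}(a))^{−1/2} du. Then there exists a positive, twice differentiable function f on the interval (−T(a), T(a)) satisfying f''(t) = (n−1)·coth(f(t))·(1+f'(t)²) for all t, with f(0) = a, f'(0) = 0, and such that f(t) → +∞ as t → T(a)⁻. -/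
open MeasureTheory

/-- The half-height `T(a)` of the `n`-dimensional catenoid `C_a` in `ℍⁿ × ℝ`. -/
noncomputable def capT (n : ℕ) (a : ℝ) : ℝ :=
  Real.sinh a ^ (n - 1) *
    ∫ u in Set.Ioi a, 1 / Real.sqrt (Real.sinh u ^ (2 * n - 2) - Real.sinh a ^ (2 * n - 2))

/-!
Write `m = n - 1`. The ODE has the first integral `1 + f'² = (sinh f / sinh a) ^ (2m)`, so on
the rising branch `f' = speed f` and the time needed to climb from `a` to `y` is
`height y = ∫_a^y ds / speed s`. The integrand behaves like `(s - a)^(-1/2)` at `a` and like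
`e^(-ms)` at infinity, so `height` increases from `0` to the finite limit `T(a)`. The solution
is the inverse of `height`, extended evenly to `(-T(a), T(a))`. Away from `0` the ODE follows
from the inverse function rule and the first integral; at `0`, where `speed a = 0` makes `height`
singular, `f'` and `f''` extend continuously, which gives the derivatives there.
-/

open Set Filter Topology Real

theorem hasDerivAt_of_hasDerivAt_of_ne_of_mem_nhds {E : Type*} [NormedAddCommGroup E]
    [NormedSpace ℝ E] {f g : ℝ → E} {s : Set ℝ} {x : ℝ} (hs : s ∈ 𝓝 x)
    (hderiv : ∀ y ∈ s, y ≠ x → HasDerivAt f (g y) y) (hf : ContinuousAt f x)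
    (hg : ContinuousAt g x) : HasDerivAt f (g x) x := by
  set u := {y | HasDerivAt f (g y) y}
  have hu : u ∈ 𝓝[≠] x := by
    filter_upwards [nhdsWithin_le_nhds hs, self_mem_nhdsWithin] with y hy hyx
    exact hderiv y hy hyx
  have hdiff : DifferentiableOn ℝ f u := fun y hy => hy.differentiableAt.differentiableWithinAt
  have hlim : Tendsto (deriv f) (𝓝[≠] x) (𝓝 (g x)) :=
    (hg.tendsto.mono_left nhdsWithin_le_nhds).congr' <| by
      filter_upwards [hu] with y hy using hy.deriv.symm
  have hright := hasDerivWithinAt_Ici_of_tendsto_deriv hdiff hf.continuousWithinAt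
    (nhdsWithin_mono _ (fun y hy => ne_of_gt hy) hu)
    (hlim.mono_left (nhdsWithin_mono _ fun y hy => ne_of_gt hy))
  have hleft := hasDerivWithinAt_Iic_of_tendsto_deriv hdiff hf.continuousWithinAt
    (nhdsWithin_mono _ (fun y hy => ne_of_lt hy) hu)
    (hlim.mono_left (nhdsWithin_mono _ fun y hy => ne_of_lt hy))
  simpa using hleft.union hright

theorem eventually_sign_eq_of_ne_zero {t : ℝ} (ht : t ≠ 0) :
    ∀ᶠ s in 𝓝 t, SignType.sign s = SignType.sign t :=
  (continuousAt_sign_of_ne_zero ht).eventually_mem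
    ((isOpen_discrete {SignType.sign t}).mem_nhds rfl)

theorem Real.sinh_sq_sub_sinh_sq (x y : ℝ) :
    sinh x ^ 2 - sinh y ^ 2 = sinh (x + y) * sinh (x - y) := by
  rw [sinh_add, sinh_sub]
  linear_combination (-sinh x ^ 2) * cosh_sq y + sinh y ^ 2 * cosh_sq x

theorem Real.exp_mul_sinh_le_sinh_add (x : ℝ) {u : ℝ} (hu : 0 ≤ u) :
    exp u * sinh x ≤ sinh (x + u) := by
  have hgap : sinh (x + u) - exp u * sinh x = sinh u * exp (-x) := by
    rw [sinh_add, ← cosh_add_sinh, ← cosh_sub_sinh]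
    ring
  linarith [mul_nonneg (sinh_nonneg_iff.2 hu) (exp_pos (-x)).le]

theorem pow_pred_mul_sub_le_pow_sub_pow {α : Type*} [CommRing α] [LinearOrder α]
    [IsStrictOrderedRing α] {x y : α} {m : ℕ} (hm : m ≠ 0) (hy : 0 ≤ y) (hyx : y ≤ x) :
    y ^ (m - 1) * (x - y) ≤ x ^ m - y ^ m := by
  have h : y ^ (m - 1) * x ≤ x ^ (m - 1) * x :=
    mul_le_mul_of_nonneg_right (pow_le_pow_left₀ hy hyx _) (hy.trans hyx)
  rw [← pow_sub_one_mul hm x, ← pow_sub_one_mul hm y]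
  linarith

noncomputable section

namespace Catenoid

variable (m : ℕ) (a : ℝ)

def radicand (y : ℝ) : ℝ := sinh y ^ (2 * m) - sinh a ^ (2 * m)

/-- `|f'|` as a function of `f`, read off from the first integral. -/
def speed (y : ℝ) : ℝ := √(radicand m a y) / sinh a ^ m

def height (y : ℝ) : ℝ := ∫ s in a..y, (speed m a s)⁻¹

def halfHeight : ℝ := ∫ s in Ioi a, (speed m a s)⁻¹

def heightInv : ℝ → ℝ := Function.invFunOn (height m a) (Ici a)

def profile (t : ℝ) : ℝ := heightInv m a |t|

def velocity (t : ℝ) : ℝ := SignType.sign t * speed m a (profile m a t)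

variable {m a}

theorem continuous_speed : Continuous (speed m a) := by
  unfold speed radicand; fun_prop

theorem radicand_pos (hm : 1 ≤ m) (ha : 0 ≤ a) {y : ℝ} (hy : a < y) : 0 < radicand m a y :=
  sub_pos.2 <| pow_lt_pow_left₀ (sinh_lt_sinh.2 hy) (sinh_nonneg_iff.2 ha) (by omega)

theorem speed_pos (hm : 1 ≤ m) (ha : 0 < a) {y : ℝ} (hy : a < y) : 0 < speed m a y :=
  div_pos (sqrt_pos.2 (radicand_pos hm ha.le hy)) (pow_pos (sinh_pos_iff.2 ha) m)

theorem speed_self : speed m a a = 0 := by simp [speed, radicand]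

theorem mul_exp_le_radicand_add (hm : 1 ≤ m) (ha : 0 ≤ a) {u : ℝ} (hu : 0 ≤ u) :
    sinh a ^ (2 * (m - 1)) * sinh (2 * a) * (u * exp u) ≤ radicand m a (a + u) := by
  have hsq : sinh a ^ 2 ≤ sinh (a + u) ^ 2 :=
    pow_le_pow_left₀ (sinh_nonneg_iff.2 ha) (sinh_le_sinh.2 (by linarith)) 2
  have hdiff : sinh (2 * a) * (u * exp u) ≤ sinh (a + u) ^ 2 - sinh a ^ 2 := by
    rw [sinh_sq_sub_sinh_sq, show a + u + a = 2 * a + u by ring, add_sub_cancel_left]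
    calc sinh (2 * a) * (u * exp u) = (exp u * sinh (2 * a)) * u := by ring
      _ ≤ sinh (2 * a + u) * sinh u :=
        mul_le_mul (exp_mul_sinh_le_sinh_add _ hu) (self_le_sinh_iff.2 hu) hu
          (sinh_nonneg_iff.2 (by linarith))
  have key := pow_pred_mul_sub_le_pow_sub_pow (m := m) (by omega) (sq_nonneg (sinh a)) hsq
  rw [← pow_mul, ← pow_mul, ← pow_mul] at key
  rw [radicand, mul_assoc]
  exact (mul_le_mul_of_nonneg_left hdiff (pow_nonneg (sinh_nonneg_iff.2 ha) _)).trans key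

-- The bound is written in the shape of `integrableOn_rpow_mul_exp_neg_mul_rpow`.
theorem inv_speed_add_le (hm : 1 ≤ m) (ha : 0 < a) {u : ℝ} (hu : 0 < u) :
    (speed m a (a + u))⁻¹ ≤ sinh a ^ m / √(sinh a ^ (2 * (m - 1)) * sinh (2 * a)) *
      (u ^ (-(1 / 2) : ℝ) * exp (-(1 / 2) * u ^ (1 : ℝ))) := by
  have hκ : 0 < sinh a ^ (2 * (m - 1)) * sinh (2 * a) :=
    mul_pos (pow_pos (sinh_pos_iff.2 ha) _) (sinh_pos_iff.2 (by linarith))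
  have hinv : (√(u * exp u))⁻¹ = u ^ (-(1 / 2) : ℝ) * exp (-(1 / 2) * u ^ (1 : ℝ)) := by
    rw [sqrt_mul hu.le, ← exp_half, mul_inv, sqrt_eq_rpow, ← rpow_neg hu.le, rpow_one,
      ← exp_neg]
    ring_nf
  calc (speed m a (a + u))⁻¹ = sinh a ^ m / √(radicand m a (a + u)) := by rw [speed, inv_div]
    _ ≤ sinh a ^ m / √(sinh a ^ (2 * (m - 1)) * sinh (2 * a) * (u * exp u)) :=
        div_le_div_of_nonneg_left (pow_nonneg (sinh_nonneg_iff.2 ha.le) m)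
          (sqrt_pos.2 (mul_pos hκ (mul_pos hu (exp_pos u))))
          (sqrt_le_sqrt (mul_exp_le_radicand_add hm ha.le hu.le))
    _ = _ := by rw [sqrt_mul hκ.le, ← hinv, div_mul_eq_div_div, div_eq_mul_inv _ (√(u * exp u))]

theorem integrableOn_inv_speed (hm : 1 ≤ m) (ha : 0 < a) :
    IntegrableOn (fun y => (speed m a y)⁻¹) (Ici a) := by
  have hdom := (integrableOn_rpow_mul_exp_neg_mul_rpow (s := -(1 / 2)) (p := 1) (b := 1 / 2)
    (by norm_num) one_pos (by norm_num)).const_mul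
    (sinh a ^ m / √(sinh a ^ (2 * (m - 1)) * sinh (2 * a)))
  have hshift : IntegrableOn (fun u => (speed m a (u + a))⁻¹) (Ioi 0) := by
    refine hdom.mono' ?_ ?_
    · exact (continuous_speed.comp (continuous_add_const a)).measurable.inv.aestronglyMeasurable
    · filter_upwards [ae_restrict_mem measurableSet_Ioi] with u hu
      rw [norm_inv, norm_of_nonneg (speed_pos hm ha (by linarith [mem_Ioi.1 hu])).le, add_comm]
      exact inv_speed_add_le hm ha hu
  rw [integrableOn_Ici_iff_integrableOn_Ioi,
    ← (measurePreserving_add_right volume a).integrableOn_comp_preimage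
      (measurableEmbedding_addRight a), preimage_add_const_Ioi, sub_self]
  exact hshift

theorem intervalIntegrable_inv_speed (hm : 1 ≤ m) (ha : 0 < a) {y z : ℝ} (hy : a ≤ y)
    (hz : a ≤ z) : IntervalIntegrable (fun s => (speed m a s)⁻¹) volume y z :=
  ((integrableOn_inv_speed hm ha).mono_set fun _ hs => (le_min hy hz).trans hs.1).intervalIntegrable

theorem height_self : height m a a = 0 := intervalIntegral.integral_same

theorem hasDerivAt_height (hm : 1 ≤ m) (ha : 0 < a) {y : ℝ} (hy : a < y) :
    HasDerivAt (height m a) (speed m a y)⁻¹ y :=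
  intervalIntegral.integral_hasDerivAt_right (intervalIntegrable_inv_speed hm ha le_rfl hy.le)
    (continuous_speed.measurable.inv.stronglyMeasurable.stronglyMeasurableAtFilter)
    (continuous_speed.continuousAt.inv₀ (speed_pos hm ha hy).ne')

theorem strictMonoOn_height (hm : 1 ≤ m) (ha : 0 < a) : StrictMonoOn (height m a) (Ici a) := by
  intro y hy z hz hyz
  have hpos : 0 < ∫ s in y..z, (speed m a s)⁻¹ :=
    intervalIntegral.intervalIntegral_pos_of_pos_on (intervalIntegrable_inv_speed hm ha hy hz)
      (fun s hs => inv_pos.2 (speed_pos hm ha (lt_of_le_of_lt hy hs.1))) hyz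
  rw [← intervalIntegral.integral_interval_sub_left (intervalIntegrable_inv_speed hm ha le_rfl hz)
    (intervalIntegrable_inv_speed hm ha le_rfl hy)] at hpos
  exact sub_pos.1 hpos

theorem continuousOn_height (hm : 1 ≤ m) (ha : 0 < a) {b : ℝ} (hab : a ≤ b) :
    ContinuousOn (height m a) (Icc a b) := by
  rw [← uIcc_of_le hab]
  exact intervalIntegral.continuousOn_primitive_interval
    ((integrableOn_inv_speed hm ha).mono_set (uIcc_of_le hab ▸ Icc_subset_Ici_self))

theorem tendsto_height (hm : 1 ≤ m) (ha : 0 < a) :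
    Tendsto (height m a) atTop (𝓝 (halfHeight m a)) :=
  intervalIntegral_tendsto_integral_Ioi a
    ((integrableOn_inv_speed hm ha).mono_set Ioi_subset_Ici_self) tendsto_id

theorem height_lt_halfHeight (hm : 1 ≤ m) (ha : 0 < a) {y : ℝ} (hy : a ≤ y) :
    height m a y < halfHeight m a := by
  have hmono := (strictMonoOn_height hm ha).monotoneOn
  have hle : height m a (y + 1) ≤ halfHeight m a :=
    ge_of_tendsto (tendsto_height hm ha) <| by
      filter_upwards [eventually_ge_atTop (y + 1)] with z hz
      exact hmono (hy.trans (by linarith)) (hy.trans (by linarith)) hz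
  exact (strictMonoOn_height hm ha hy (hy.trans (by linarith)) (by linarith)).trans_le hle

theorem image_height (hm : 1 ≤ m) (ha : 0 < a) :
    height m a '' Ici a = Ico 0 (halfHeight m a) := by
  refine subset_antisymm ?_ fun τ hτ => ?_
  · rintro _ ⟨y, hy, rfl⟩
    refine ⟨?_, height_lt_halfHeight hm ha hy⟩
    rw [← height_self (m := m)]
    exact (strictMonoOn_height hm ha).monotoneOn self_mem_Ici hy hy
  · obtain ⟨b, hb, hab⟩ :=
      ((tendsto_height hm ha).eventually_const_lt hτ.2 |>.and (eventually_ge_atTop a)).exists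
    obtain ⟨y, hy, rfl⟩ := intermediate_value_Icc hab (continuousOn_height hm ha hab)
      ⟨height_self (m := m) ▸ hτ.1, hb.le⟩
    exact ⟨y, hy.1, rfl⟩

theorem one_add_speed_sq (ha : 0 < a) {y : ℝ} (hy : a ≤ y) :
    1 + speed m a y ^ 2 = sinh y ^ (2 * m) / sinh a ^ (2 * m) := by
  have hR : 0 ≤ radicand m a y :=
    sub_nonneg.2 (pow_le_pow_left₀ (sinh_nonneg_iff.2 ha.le) (sinh_le_sinh.2 hy) _)
  have hA : sinh a ^ (2 * m) ≠ 0 := pow_ne_zero _ (sinh_pos_iff.2 ha).ne'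
  rw [speed, div_pow, sq_sqrt hR, ← pow_mul, mul_comm m 2, radicand]
  field_simp
  ring

theorem hasDerivAt_speed (hm : 1 ≤ m) (ha : 0 < a) {y : ℝ} (hy : a < y) :
    HasDerivAt (speed m a) (m * (cosh y / sinh y) * (1 + speed m a y ^ 2) / speed m a y) y := by
  have hR := radicand_pos hm ha.le hy
  have hd : HasDerivAt (speed m a)
      ((2 * m : ℕ) * sinh y ^ (2 * m - 1) * cosh y / (2 * √(radicand m a y)) / sinh a ^ m) y :=
    ((((hasDerivAt_sinh y).pow (2 * m)).sub_const (sinh a ^ (2 * m))).sqrt hR.ne').div_const _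
  refine hd.congr_deriv ?_
  have hsy : sinh y ≠ 0 := (sinh_pos_iff.2 (ha.trans hy)).ne'
  have hsa : sinh a ≠ 0 := (sinh_pos_iff.2 ha).ne'
  have hsq : √(radicand m a y) ≠ 0 := (sqrt_pos.2 hR).ne'
  rw [one_add_speed_sq ha hy.le, speed, ← pow_sub_one_mul (by omega : 2 * m ≠ 0) (sinh y)]
  field_simp
  rw [mul_comm 2 m, pow_mul]
  push_cast
  ring

theorem halfHeight_pos (hm : 1 ≤ m) (ha : 0 < a) : 0 < halfHeight m a :=
  height_self (m := m) ▸ height_lt_halfHeight hm ha le_rfl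

section heightInv

variable {τ : ℝ}

theorem heightInv_mem_Ici (hm : 1 ≤ m) (ha : 0 < a) (hτ : τ ∈ Ico 0 (halfHeight m a)) :
    heightInv m a τ ∈ Ici a :=
  Function.invFunOn_mem (by rwa [← image_height hm ha] at hτ)

theorem height_heightInv (hm : 1 ≤ m) (ha : 0 < a) (hτ : τ ∈ Ico 0 (halfHeight m a)) :
    height m a (heightInv m a τ) = τ :=
  Function.invFunOn_eq (by rwa [← image_height hm ha] at hτ)

theorem heightInv_height (hm : 1 ≤ m) (ha : 0 < a) {y : ℝ} (hy : a ≤ y) :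
    heightInv m a (height m a y) = y :=
  (strictMonoOn_height hm ha).injOn.leftInvOn_invFunOn hy

theorem heightInv_zero (hm : 1 ≤ m) (ha : 0 < a) : heightInv m a 0 = a := by
  simpa only [height_self] using heightInv_height hm ha le_rfl

theorem strictMonoOn_heightInv (hm : 1 ≤ m) (ha : 0 < a) :
    StrictMonoOn (heightInv m a) (Ico 0 (halfHeight m a)) := by
  intro τ hτ σ hσ hτσ
  by_contra! hle
  have := (strictMonoOn_height hm ha).monotoneOn (heightInv_mem_Ici hm ha hσ)
    (heightInv_mem_Ici hm ha hτ) hle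
  rw [height_heightInv hm ha hτ, height_heightInv hm ha hσ] at this
  linarith

theorem image_heightInv (hm : 1 ≤ m) (ha : 0 < a) :
    heightInv m a '' Ico 0 (halfHeight m a) = Ici a := by
  rw [← image_height hm ha]
  exact (strictMonoOn_height hm ha).injOn.leftInvOn_invFunOn.image_image

theorem lt_heightInv (hm : 1 ≤ m) (ha : 0 < a) (hτ : τ ∈ Ioo 0 (halfHeight m a)) :
    a < heightInv m a τ :=
  (heightInv_zero hm ha).symm.trans_lt <| strictMonoOn_heightInv hm ha
    ⟨le_rfl, halfHeight_pos hm ha⟩ (Ioo_subset_Ico_self hτ) hτ.1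

theorem continuousWithinAt_heightInv_zero (hm : 1 ≤ m) (ha : 0 < a) :
    ContinuousWithinAt (heightInv m a) (Ici 0) 0 :=
  continuousWithinAt_right_of_monotoneOn_of_image_mem_nhdsWithin
    (strictMonoOn_heightInv hm ha).monotoneOn (Ico_mem_nhdsGE (halfHeight_pos hm ha))
    (by rw [image_heightInv hm ha, heightInv_zero hm ha]; exact self_mem_nhdsWithin)

theorem continuousAt_heightInv (hm : 1 ≤ m) (ha : 0 < a) (hτ : τ ∈ Ioo 0 (halfHeight m a)) :
    ContinuousAt (heightInv m a) τ :=
  continuousAt_of_monotoneOn_of_image_mem_nhds (strictMonoOn_heightInv hm ha).monotoneOn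
    (Ico_mem_nhds hτ.1 hτ.2)
    (by rw [image_heightInv hm ha]; exact Ici_mem_nhds (lt_heightInv hm ha hτ))

theorem hasDerivAt_heightInv (hm : 1 ≤ m) (ha : 0 < a) (hτ : τ ∈ Ioo 0 (halfHeight m a)) :
    HasDerivAt (heightInv m a) (speed m a (heightInv m a τ)) τ := by
  have hy := lt_heightInv hm ha hτ
  simpa only [inv_inv] using (hasDerivAt_height hm ha hy).of_local_left_inverse
    (continuousAt_heightInv hm ha hτ) (inv_ne_zero (speed_pos hm ha hy).ne') <| by
      filter_upwards [Ioo_mem_nhds hτ.1 hτ.2] with σ hσ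
      exact height_heightInv hm ha (Ioo_subset_Ico_self hσ)

end heightInv

section profile

variable {t : ℝ}

theorem profile_zero (hm : 1 ≤ m) (ha : 0 < a) : profile m a 0 = a := by
  rw [profile, abs_zero, heightInv_zero hm ha]

theorem velocity_zero : velocity m a 0 = 0 := by simp [velocity]

theorem le_profile (hm : 1 ≤ m) (ha : 0 < a) (ht : |t| < halfHeight m a) : a ≤ profile m a t :=
  heightInv_mem_Ici hm ha ⟨abs_nonneg t, ht⟩

theorem continuousAt_profile_zero (hm : 1 ≤ m) (ha : 0 < a) : ContinuousAt (profile m a) 0 := by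
  have h : ContinuousWithinAt (fun s => heightInv m a |s|) univ 0 := by
    refine ContinuousWithinAt.comp (t := Ici 0) ?_ continuous_abs.continuousWithinAt
      fun s _ => abs_nonneg s
    rw [abs_zero]
    exact continuousWithinAt_heightInv_zero hm ha
  exact (continuousWithinAt_univ _ _).1 h

theorem profile_eventuallyEq (ht0 : t ≠ 0) :
    profile m a =ᶠ[𝓝 t] fun s => heightInv m a (SignType.sign t * s) := by
  filter_upwards [eventually_sign_eq_of_ne_zero ht0] with s hs
  rw [profile, ← hs, sign_mul_self]

theorem velocity_eventuallyEq (ht0 : t ≠ 0) :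
    velocity m a =ᶠ[𝓝 t]
      fun s => SignType.sign t * speed m a (heightInv m a (SignType.sign t * s)) := by
  filter_upwards [eventually_sign_eq_of_ne_zero ht0] with s hs
  rw [velocity, profile, ← hs, sign_mul_self]

theorem hasDerivAt_profile (hm : 1 ≤ m) (ha : 0 < a) (ht0 : t ≠ 0)
    (ht : |t| < halfHeight m a) : HasDerivAt (profile m a) (velocity m a t) t := by
  have hτ : (SignType.sign t : ℝ) * t ∈ Ioo 0 (halfHeight m a) := by
    rw [sign_mul_self]; exact ⟨abs_pos.2 ht0, ht⟩
  have h := (hasDerivAt_heightInv hm ha hτ).comp t ((hasDerivAt_id t).const_mul _)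
  rw [sign_mul_self, mul_one, mul_comm] at h
  exact h.congr_of_eventuallyEq (profile_eventuallyEq ht0)

theorem hasDerivAt_velocity (hm : 1 ≤ m) (ha : 0 < a) (ht0 : t ≠ 0)
    (ht : |t| < halfHeight m a) :
    HasDerivAt (velocity m a)
      (m * (cosh (profile m a t) / sinh (profile m a t)) * (1 + velocity m a t ^ 2)) t := by
  have hτ : (SignType.sign t : ℝ) * t ∈ Ioo 0 (halfHeight m a) := by
    rw [sign_mul_self]; exact ⟨abs_pos.2 ht0, ht⟩
  have hy := lt_heightInv hm ha hτ
  have h := (((hasDerivAt_speed hm ha hy).comp _ (hasDerivAt_heightInv hm ha hτ)).comp t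
    ((hasDerivAt_id t).const_mul _)).const_mul (SignType.sign t : ℝ)
  have hsq : (SignType.sign t : ℝ) * SignType.sign t = 1 := by
    rw [← SignType.coe_mul, ← sign_mul, sign_pos (mul_self_pos.2 ht0), SignType.coe_one]
  rw [sign_mul_self] at h hy
  refine (h.congr_of_eventuallyEq (velocity_eventuallyEq ht0)).congr_deriv ?_
  rw [velocity, profile, mul_pow, sq (SignType.sign t : ℝ), hsq, one_mul,
    div_mul_cancel₀ _ (speed_pos hm ha hy).ne']
  linear_combination (m * (cosh (heightInv m a |t|) / sinh (heightInv m a |t|)) *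
    (1 + speed m a (heightInv m a |t|) ^ 2)) * hsq

theorem continuousAt_velocity_zero (hm : 1 ≤ m) (ha : 0 < a) :
    ContinuousAt (velocity m a) 0 := by
  have hspeed : Tendsto (fun t => speed m a (profile m a t)) (𝓝 0) (𝓝 0) := by
    have h := (continuous_speed (m := m) (a := a)).continuousAt.comp
      (continuousAt_profile_zero hm ha)
    rwa [ContinuousAt, Function.comp_apply, profile_zero hm ha, speed_self] at h
  rw [ContinuousAt, velocity_zero]
  refine squeeze_zero_norm (fun t => ?_) (norm_zero (E := ℝ) ▸ hspeed.norm)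
  rw [velocity, norm_mul]
  exact mul_le_of_le_one_left (norm_nonneg _) (by cases SignType.sign t <;> simp)

theorem continuousAt_accel_zero (hm : 1 ≤ m) (ha : 0 < a) :
    ContinuousAt (fun t => m * (cosh (profile m a t) / sinh (profile m a t)) *
      (1 + velocity m a t ^ 2)) 0 := by
  have hf := continuousAt_profile_zero hm ha
  have hv := continuousAt_velocity_zero hm ha
  have hsinh : sinh (profile m a 0) ≠ 0 := by
    rw [profile_zero hm ha]; exact (sinh_pos_iff.2 ha).ne'
  fun_prop (disch := exact hsinh)

theorem hasDerivAt_profile_of_mem (hm : 1 ≤ m) (ha : 0 < a)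
    (ht : t ∈ Ioo (-halfHeight m a) (halfHeight m a)) :
    HasDerivAt (profile m a) (velocity m a t) t := by
  rcases eq_or_ne t 0 with rfl | ht0
  · exact hasDerivAt_of_hasDerivAt_of_ne_of_mem_nhds (Ioo_mem_nhds ht.1 ht.2)
      (fun s hs hs0 => hasDerivAt_profile hm ha hs0 (abs_lt.2 hs))
      (continuousAt_profile_zero hm ha) (continuousAt_velocity_zero hm ha)
  · exact hasDerivAt_profile hm ha ht0 (abs_lt.2 ht)

theorem hasDerivAt_velocity_of_mem (hm : 1 ≤ m) (ha : 0 < a)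
    (ht : t ∈ Ioo (-halfHeight m a) (halfHeight m a)) :
    HasDerivAt (velocity m a)
      (m * (cosh (profile m a t) / sinh (profile m a t)) * (1 + velocity m a t ^ 2)) t := by
  rcases eq_or_ne t 0 with rfl | ht0
  · exact hasDerivAt_of_hasDerivAt_of_ne_of_mem_nhds (Ioo_mem_nhds ht.1 ht.2)
      (fun s hs hs0 => hasDerivAt_velocity hm ha hs0 (abs_lt.2 hs))
      (continuousAt_velocity_zero hm ha) (continuousAt_accel_zero hm ha)
  · exact hasDerivAt_velocity hm ha ht0 (abs_lt.2 ht)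

theorem tendsto_profile (hm : 1 ≤ m) (ha : 0 < a) :
    Tendsto (profile m a) (𝓝[Ioo (-halfHeight m a) (halfHeight m a)] halfHeight m a) atTop := by
  refine tendsto_atTop.2 fun M => ?_
  have hy : a ≤ max M a := le_max_right M a
  have hmem : height m a (max M a) ∈ Ico 0 (halfHeight m a) :=
    image_height hm ha ▸ mem_image_of_mem _ hy
  filter_upwards [self_mem_nhdsWithin, nhdsWithin_le_nhds (Ioi_mem_nhds hmem.2)] with t ht hyt
  have ht0 : 0 < t := hmem.1.trans_lt hyt
  rw [profile, abs_of_pos ht0]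
  calc M ≤ max M a := le_max_left M a
    _ = heightInv m a (height m a (max M a)) := (heightInv_height hm ha hy).symm
    _ ≤ heightInv m a t :=
      (strictMonoOn_heightInv hm ha).monotoneOn hmem ⟨ht0.le, ht.2⟩ hyt.le

end profile

theorem capT_succ : capT (m + 1) a = halfHeight m a := by
  rw [capT, halfHeight, ← integral_const_mul, Nat.add_sub_cancel,
    show 2 * (m + 1) - 2 = 2 * m by omega]
  congr 1 with u
  rw [speed, radicand, inv_div, mul_one_div]

end Catenoid

end

/-- there is a positive, twice differentiable solution of the catenoid ODE
`f'' = (n-1) coth(f) (1 + f'^2)`, `f(0) = a`, `f'(0) = 0` on `(-T(a), T(a))`, with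
`f(t) → +∞` as `t → T(a)⁻`. -/
theorem stmt_4 (n : ℕ) (hn : 2 ≤ n) (a : ℝ) (ha : 0 < a) :
    ∃ f f' : ℝ → ℝ,
      (∀ t ∈ Set.Ioo (-(capT n a)) (capT n a), 0 < f t) ∧
      (∀ t ∈ Set.Ioo (-(capT n a)) (capT n a), HasDerivAt f (f' t) t) ∧
      (∀ t ∈ Set.Ioo (-(capT n a)) (capT n a),
        HasDerivAt f'
          (((n : ℝ) - 1) * (Real.cosh (f t) / Real.sinh (f t)) * (1 + f' t ^ 2)) t) ∧
      f 0 = a ∧ f' 0 = 0 ∧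
      Filter.Tendsto f (nhdsWithin (capT n a) (Set.Ioo (-(capT n a)) (capT n a)))
        Filter.atTop := by
  obtain ⟨m, rfl⟩ : ∃ m, n = m + 1 := ⟨n - 1, by omega⟩
  have hm : 1 ≤ m := by omega
  have hcoef : ((m + 1 : ℕ) : ℝ) - 1 = m := by push_cast; ring
  rw [Catenoid.capT_succ, hcoef]
  exact ⟨Catenoid.profile m a, Catenoid.velocity m a,
    fun t ht => ha.trans_le (Catenoid.le_profile hm ha (abs_lt.2 ht)),
    fun t => Catenoid.hasDerivAt_profile_of_mem hm ha,
    fun t => Catenoid.hasDerivAt_velocity_of_mem hm ha,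
    Catenoid.profile_zero hm ha, Catenoid.velocity_zero, Catenoid.tendsto_profile hm ha⟩
end

section
/- For every integer n ≥ 2 and every a > 0, the improper integral T(a) = sinh^{n−1}(a) · ∫_a^∞ (sinh^{2n−2}(u) − sinh^{2n−2}(a))^{−1/2} du converges (i.e. the integrand is integrable on (a, ∞), with an integrable singularity at u = a and exponential decay at infinity), so T(a) is a finite positive real number. -/
set_option maxHeartbeats 1000000


open MeasureTheory

/-- linear lower bound for sinh differences -/
lemma sinh_diff_lb {a u : ℝ} (ha : 0 ≤ a) (hu : a < u) : u - a ≤ Real.sinh u - Real.sinh a := by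
  have h1 : Real.sinh u = Real.sinh (u - a) * Real.cosh a + Real.cosh (u - a) * Real.sinh a := by
    rw [← Real.sinh_add]; ring_nf
  have h2 : u - a < Real.sinh (u - a) := (Real.self_lt_sinh_iff).2 (by linarith)
  have h3 : 1 ≤ Real.cosh a := Real.one_le_cosh a
  have h4 : 1 ≤ Real.cosh (u - a) := Real.one_le_cosh _
  have h5 : 0 ≤ Real.sinh a := Real.sinh_nonneg_iff.2 ha
  nlinarith

/-- lower bound near the singularity -/
lemma pow_diff_lb {s t : ℝ} (hs : 0 < s) (hst : s ≤ t) {m : ℕ} (hm : 1 ≤ m) :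
    s ^ (m - 1) * (t - s) ≤ t ^ m - s ^ m := by
  have ht : 0 ≤ t := le_trans hs.le hst
  have h1 : s ^ (m - 1) ≤ t ^ (m - 1) := pow_le_pow_left₀ hs.le hst _
  have h2 : s ^ (m - 1) * t ≤ t ^ (m - 1) * t :=
    mul_le_mul_of_nonneg_right h1 ht
  have h3 : t ^ (m - 1) * t = t ^ m := by
    rw [← pow_succ]; congr 1; omega
  have h4 : s ^ (m - 1) * s = s ^ m := by
    rw [← pow_succ]; congr 1; omega
  nlinarith

/-- lower bound for the tail -/
lemma pow_diff_lb' {s t : ℝ} (hs : 0 < s) (hst : s ≤ t) {m : ℕ} (hm1 : 1 ≤ m) :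
    t ^ (m - 1) * (t - s) ≤ t ^ m - s ^ m := by
  have ht : 0 ≤ t := le_trans hs.le hst
  have h1 : s ^ (m - 1) ≤ t ^ (m - 1) := pow_le_pow_left₀ hs.le hst _
  have h3 : t ^ (m - 1) * t = t ^ m := by
    rw [← pow_succ]; congr 1; omega
  have h4 : s ^ (m - 1) * s = s ^ m := by
    rw [← pow_succ]; congr 1; omega
  nlinarith

/-- the improper integral defining the half-height
`T(a) = sinh^{n-1}(a) ∫_a^∞ (sinh^{2n-2}(u) - sinh^{2n-2}(a))^{-1/2} du` converges,
and `T(a)` is a finite positive real number. -/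
theorem stmt_5 (n : ℕ) (hn : 2 ≤ n) (a : ℝ) (ha : 0 < a) :
    IntegrableOn
      (fun u => 1 / Real.sqrt (Real.sinh u ^ (2 * n - 2) - Real.sinh a ^ (2 * n - 2)))
      (Set.Ioi a) ∧
    0 < Real.sinh a ^ (n - 1) *
      ∫ u in Set.Ioi a,
        1 / Real.sqrt (Real.sinh u ^ (2 * n - 2) - Real.sinh a ^ (2 * n - 2)) := by
  set m : ℕ := 2 * n - 2 with hm_def
  have hm : 2 ≤ m := by omega
  set f : ℝ → ℝ := fun u => 1 / Real.sqrt (Real.sinh u ^ m - Real.sinh a ^ m) with hf_def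
  have hsa : 0 < Real.sinh a := Real.sinh_pos_iff.2 ha
  -- positivity of the integrand on Ioi a
  have hpos : ∀ u ∈ Set.Ioi a, 0 < f u := by
    intro u hu
    have hu' : a < u := hu
    have h1 : Real.sinh a < Real.sinh u := Real.sinh_lt_sinh.2 hu'
    have h2 : Real.sinh a ^ m < Real.sinh u ^ m :=
      pow_lt_pow_left₀ h1 hsa.le (by omega)
    have : 0 < Real.sqrt (Real.sinh u ^ m - Real.sinh a ^ m) :=
      Real.sqrt_pos.2 (by linarith)
    positivity
  have hnonneg : ∀ u, 0 ≤ f u := fun u => by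
    simp only [hf_def]; positivity
  -- measurability
  have hmeas : ∀ s : Set ℝ, AEStronglyMeasurable f (volume.restrict s) := by
    intro s
    apply Measurable.aestronglyMeasurable
    apply Measurable.div measurable_const
    exact (Real.measurable_sinh.pow_const m |>.sub measurable_const).sqrt
  -- key lower bound near a
  have hK : 0 < Real.sinh a ^ (m - 1) := pow_pos hsa _
  have hlb1 : ∀ u ∈ Set.Ioc a (a + 1),
      Real.sinh a ^ (m - 1) * (u - a) ≤ Real.sinh u ^ m - Real.sinh a ^ m := by
    intro u hu
    have hu1 : a < u := hu.1
    have h1 : u - a ≤ Real.sinh u - Real.sinh a := sinh_diff_lb ha.le hu1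
    have h2 := pow_diff_lb hsa (Real.sinh_le_sinh.2 hu1.le) (m := m) (by omega)
    nlinarith
  -- integrability on Ioc a (a+1)
  have hI1 : IntegrableOn f (Set.Ioc a (a + 1)) := by
    have hbase : IntervalIntegrable (fun x : ℝ => x ^ (-(1/2) : ℝ)) volume 0 1 :=
      intervalIntegral.intervalIntegrable_rpow' (by norm_num)
    have htrans : IntervalIntegrable (fun x : ℝ => (x - a) ^ (-(1/2) : ℝ)) volume a (a + 1) := by
      have h := hbase.comp_sub_right a
      rw [zero_add] at h
      rwa [add_comm 1 a] at h
    have hg : IntegrableOn (fun x : ℝ => (x - a) ^ (-(1/2) : ℝ)) (Set.Ioc a (a + 1)) :=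
      (intervalIntegrable_iff_integrableOn_Ioc_of_le (by linarith)).1 htrans
    have hg2 : IntegrableOn
        (fun x : ℝ => (Real.sqrt (Real.sinh a ^ (m-1)))⁻¹ * (x - a) ^ (-(1/2) : ℝ))
        (Set.Ioc a (a + 1)) := hg.const_mul _
    apply Integrable.mono' hg2 (hmeas _)
    filter_upwards [ae_restrict_mem measurableSet_Ioc] with u hu
    have hu1 : a < u := hu.1
    have hD : Real.sinh a ^ (m - 1) * (u - a) ≤ Real.sinh u ^ m - Real.sinh a ^ m := hlb1 u hu
    have hua : 0 < u - a := by linarith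
    rw [Real.norm_eq_abs, abs_of_nonneg (hnonneg u)]
    have hsqrt : Real.sqrt (Real.sinh a ^ (m-1) * (u - a)) ≤
        Real.sqrt (Real.sinh u ^ m - Real.sinh a ^ m) := Real.sqrt_le_sqrt hD
    have hsp : 0 < Real.sqrt (Real.sinh a ^ (m-1) * (u - a)) :=
      Real.sqrt_pos.2 (by positivity)
    have h1 : f u ≤ 1 / Real.sqrt (Real.sinh a ^ (m-1) * (u - a)) := by
      apply one_div_le_one_div_of_le hsp hsqrt
    refine h1.trans (le_of_eq ?_)
    rw [show ((u - a) : ℝ) ^ (-(1/2) : ℝ) = (Real.sqrt (u - a))⁻¹ by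
        rw [Real.rpow_neg hua.le, Real.sqrt_eq_rpow],
      ← mul_inv, ← Real.sqrt_mul (by positivity), one_div]
  -- integrability on Ioi (a+1)
  have hI2 : IntegrableOn f (Set.Ioi (a + 1)) := by
    have hexp : IntegrableOn (fun u : ℝ => Real.exp (-(1/2 : ℝ) * u)) (Set.Ioi (a+1)) :=
      exp_neg_integrableOn_Ioi (a+1) (by norm_num)
    have hg : IntegrableOn (fun u : ℝ => (2:ℝ) * Real.exp (-(1/2 : ℝ) * u)) (Set.Ioi (a+1)) :=
      hexp.const_mul (2:ℝ)
    apply Integrable.mono' hg (hmeas _)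
    filter_upwards [ae_restrict_mem measurableSet_Ioi] with u hu
    have hu1 : a + 1 < u := hu
    have hu0 : 1 < u := by linarith
    have hsu : Real.sinh a < Real.sinh u := Real.sinh_lt_sinh.2 (by linarith)
    -- sinh u - sinh a ≥ 1
    have h1 : 1 ≤ Real.sinh u - Real.sinh a := by
      have := sinh_diff_lb ha.le (show a < u by linarith)
      linarith
    -- sinh u ≥ exp u / 4
    have hexpu : Real.exp 1 ≤ Real.exp u := Real.exp_le_exp.2 hu0.le
    have he1 : (2:ℝ) ≤ Real.exp 1 := by
      have := Real.add_one_le_exp (1:ℝ); linarith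
    have hsinh4 : Real.exp u / 4 ≤ Real.sinh u := by
      rw [Real.sinh_eq]
      have hneg : Real.exp (-u) ≤ 1 := Real.exp_le_one_iff.2 (by linarith)
      have : (2:ℝ) ≤ Real.exp u := by linarith
      linarith
    have hsu1 : 1 < Real.sinh u := by
      have : 1 < Real.sinh 1 := (Real.self_lt_sinh_iff).2 one_pos
      have := Real.sinh_lt_sinh.2 hu0
      linarith
    -- sinh u ^ (m-1) ≥ sinh u
    have hpowm : Real.sinh u ≤ Real.sinh u ^ (m - 1) := by
      calc Real.sinh u = Real.sinh u ^ 1 := (pow_one _).symm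
        _ ≤ Real.sinh u ^ (m - 1) := pow_le_pow_right₀ hsu1.le (by omega)
    have hD : Real.exp u / 4 ≤ Real.sinh u ^ m - Real.sinh a ^ m := by
      have h2 := pow_diff_lb' hsa hsu.le (m := m) (by omega)
      have h3 : Real.sinh u ≤ Real.sinh u ^ (m-1) * (Real.sinh u - Real.sinh a) := by
        nlinarith [pow_pos (hsa.trans hsu) (m-1)]
      linarith
    rw [Real.norm_eq_abs, abs_of_nonneg (hnonneg u)]
    have hsqrt : Real.sqrt (Real.exp u / 4) ≤
        Real.sqrt (Real.sinh u ^ m - Real.sinh a ^ m) := Real.sqrt_le_sqrt hD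
    have hsp : 0 < Real.sqrt (Real.exp u / 4) := Real.sqrt_pos.2 (by positivity)
    have h4 : f u ≤ 1 / Real.sqrt (Real.exp u / 4) :=
      one_div_le_one_div_of_le hsp hsqrt
    refine h4.trans (le_of_eq ?_)
    have : Real.sqrt (Real.exp u / 4) = Real.exp (u/2) / 2 := by
      rw [Real.sqrt_div (Real.exp_nonneg u), ← Real.exp_half,
        show (4:ℝ) = 2^2 by norm_num, Real.sqrt_sq (by norm_num : (0:ℝ) ≤ 2)]
    rw [this, div_div_eq_mul_div, one_mul, div_eq_mul_inv, ← Real.exp_neg,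
      show -(u/2) = -(1/2)*u by ring]
  -- combine
  have hI : IntegrableOn f (Set.Ioi a) := by
    have : Set.Ioc a (a+1) ∪ Set.Ioi (a+1) = Set.Ioi a :=
      Set.Ioc_union_Ioi_eq_Ioi (by linarith)
    rw [← this]
    exact hI1.union hI2
  refine ⟨hI, ?_⟩
  apply mul_pos (pow_pos hsa _)
  rw [setIntegral_pos_iff_support_of_nonneg_ae]
  · have hsub : Set.Ioi a ⊆ Function.support f := fun u hu => (hpos u hu).ne'
    have : Function.support f ∩ Set.Ioi a = Set.Ioi a := Set.inter_eq_right.2 hsub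
    rw [this]
    simp [Real.volume_Ioi]
  · filter_upwards with u using hnonneg u
  · exact hI
end

section
/- For every integer n ≥ 2, the function a ↦ T(a) := sinh(a) · ∫_1^∞ (v^{2n−2} − 1)^{−1/2} · (sinh²(a)·v² + 1)^{−1/2} dv is differentiable on (0, ∞) with derivative T'(a) = cosh(a) · ∫_1^∞ (v^{2n−2} − 1)^{−1/2} · (sinh²(a)·v² + 1)^{−3/2} dv, which is strictly positive; hence T is strictly increasing on (0, ∞). -/
/-!
Differentiate under the integral sign. The `c`-derivative of `sinh c / √(sinh² c v² + 1)` is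
`cosh c / √(sinh² c v² + 1)³`, and since `√(s² v² + 1)^k ≥ s v`, for `c` near `a > 0` both are
dominated by a constant times `1 / (v √(v^m - 1)) ≤ 1 / (v √(v² - 1))`. The latter is integrable
on `(1, ∞)`, being the derivative of `arccos (1 / v)`. The derivative of `T` is then the integral
of a positive function, hence positive, and `T` is strictly increasing.
-/

open MeasureTheory Set Real Filter

lemma hasDerivAt_sinh_mul_one_div_mul_sqrt (A v c : ℝ) :
    HasDerivAt (fun x => sinh x * (1 / (A * √(sinh x ^ 2 * v ^ 2 + 1))))
      (cosh c * (1 / (A * √(sinh c ^ 2 * v ^ 2 + 1) ^ 3))) c := by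
  have hpos : 0 < sinh c ^ 2 * v ^ 2 + 1 := by positivity
  have hS := ((((hasDerivAt_sinh c).pow 2).mul_const (v ^ 2)).add_const 1).sqrt hpos.ne'
  have hS0 := (sqrt_pos.2 hpos).ne'
  have hsq := sq_sqrt hpos.le
  have hfun : (fun x => sinh x * (1 / (A * √(sinh x ^ 2 * v ^ 2 + 1))))
      = fun x => A⁻¹ * (sinh x / √(sinh x ^ 2 * v ^ 2 + 1)) := by
    funext x
    rw [mul_one_div, div_mul_eq_div_div_swap, div_eq_inv_mul]
  rw [hfun]
  refine (((hasDerivAt_sinh c).div hS hS0).const_mul A⁻¹).congr_deriv ?_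
  simp only [Pi.pow_apply]
  field_simp
  rw [hsq]
  ring

lemma mul_le_sqrt_sq_mul_sq_add_one_pow (s v : ℝ) {k : ℕ} (hk : k ≠ 0) :
    s * v ≤ √(s ^ 2 * v ^ 2 + 1) ^ k := by
  have hle : s * v ≤ √(s ^ 2 * v ^ 2 + 1) := le_sqrt_of_sq_le (by nlinarith)
  have hone : 1 ≤ √(s ^ 2 * v ^ 2 + 1) := one_le_sqrt.2 (le_add_of_nonneg_left (by positivity))
  exact hle.trans (le_self_pow₀ hone hk)

lemma one_div_mul_sqrt_pow_le {A s₀ s v : ℝ} (hA : 0 < A) (hs₀ : 0 < s₀) (hs : s₀ ≤ s)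
    (hv : 0 < v) {k : ℕ} (hk : k ≠ 0) :
    1 / (A * √(s ^ 2 * v ^ 2 + 1) ^ k) ≤ s₀⁻¹ * (1 / (A * v)) := by
  rw [inv_mul_eq_div, div_div, mul_assoc]
  gcongr
  calc v * s₀ ≤ s * v := by nlinarith
    _ ≤ _ := mul_le_sqrt_sq_mul_sq_add_one_pow s v hk

lemma integrableOn_one_div_mul_sqrt_pow {A : ℝ → ℝ} (hA_meas : Measurable A)
    (hA : ∀ v ∈ Ioi (1 : ℝ), 0 < A v) (hAint : IntegrableOn (fun v => 1 / (A v * v)) (Ioi 1))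
    {s : ℝ} (hs : 0 < s) {k : ℕ} (hk : k ≠ 0) :
    IntegrableOn (fun v => 1 / (A v * √(s ^ 2 * v ^ 2 + 1) ^ k)) (Ioi 1) := by
  refine (hAint.const_mul s⁻¹).mono' (by fun_prop : Measurable _).aestronglyMeasurable <|
    ae_restrict_of_forall_mem measurableSet_Ioi fun v hv => ?_
  have := hA v hv
  rw [norm_of_nonneg (by positivity)]
  exact one_div_mul_sqrt_pow_le this hs le_rfl (zero_lt_one.trans hv) hk

theorem hasDerivAt_sinh_mul_integral_one_div_mul_sqrt {A : ℝ → ℝ} (hA_meas : Measurable A)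
    (hA : ∀ v ∈ Ioi (1 : ℝ), 0 < A v) (hAint : IntegrableOn (fun v => 1 / (A v * v)) (Ioi 1))
    {a : ℝ} (ha : 0 < a) :
    HasDerivAt (fun c => sinh c * ∫ v in Ioi 1, 1 / (A v * √(sinh c ^ 2 * v ^ 2 + 1)))
      (cosh a * ∫ v in Ioi 1, 1 / (A v * √(sinh a ^ 2 * v ^ 2 + 1) ^ 3)) a := by
  simp_rw [← integral_const_mul]
  have hsinh : 0 < sinh (a / 2) := sinh_pos_iff.2 (by linarith)
  have hint : IntegrableOn (fun v => 1 / (A v * √(sinh a ^ 2 * v ^ 2 + 1) ^ 1)) (Ioi 1) :=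
    integrableOn_one_div_mul_sqrt_pow hA_meas hA hAint (sinh_pos_iff.2 ha) one_ne_zero
  simp only [pow_one] at hint
  refine (hasDerivAt_integral_of_dominated_loc_of_deriv_le (Metric.ball_mem_nhds a (half_pos ha))
    (bound := fun v => cosh (3 * a / 2) * ((sinh (a / 2))⁻¹ * (1 / (A v * v))))
    (Eventually.of_forall fun c => (by fun_prop : Measurable _).aestronglyMeasurable)
    (hint.const_mul _) (by fun_prop : Measurable _).aestronglyMeasurable ?_
    ((hAint.const_mul _).const_mul _)
    (ae_of_all _ fun v c _ => hasDerivAt_sinh_mul_one_div_mul_sqrt (A v) v c)).2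
  refine ae_restrict_of_forall_mem measurableSet_Ioi fun v hv c hc => ?_
  rw [Metric.mem_ball, Real.dist_eq, abs_sub_lt_iff] at hc
  have hAv := hA v hv
  rw [norm_of_nonneg (by positivity)]
  gcongr ?_ * ?_
  · exact cosh_le_cosh.2 (by rw [abs_of_pos (by linarith), abs_of_pos (by linarith)]; linarith)
  · exact one_div_mul_sqrt_pow_le hAv hsinh (sinh_le_sinh.2 (by linarith))
      (zero_lt_one.trans hv) three_ne_zero

lemma setIntegral_one_div_mul_sqrt_pow_pos {A : ℝ → ℝ} (hA_meas : Measurable A)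
    (hA : ∀ v ∈ Ioi (1 : ℝ), 0 < A v) (hAint : IntegrableOn (fun v => 1 / (A v * v)) (Ioi 1))
    {s : ℝ} (hs : 0 < s) {k : ℕ} (hk : k ≠ 0) :
    0 < ∫ v in Ioi 1, 1 / (A v * √(s ^ 2 * v ^ 2 + 1) ^ k) := by
  have hpos : ∀ v ∈ Ioi (1 : ℝ), 0 < 1 / (A v * √(s ^ 2 * v ^ 2 + 1) ^ k) := fun v hv => by
    have := hA v hv
    positivity
  rw [setIntegral_pos_iff_support_of_nonneg_ae
    (ae_restrict_of_forall_mem measurableSet_Ioi fun v hv => (hpos v hv).le)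
    (integrableOn_one_div_mul_sqrt_pow hA_meas hA hAint hs hk),
    inter_eq_right.2 fun v hv => Function.mem_support.2 (hpos v hv).ne', volume_Ioi]
  exact ENNReal.zero_lt_top

lemma hasDerivAt_arccos_inv {v : ℝ} (hv : 1 < v) :
    HasDerivAt (fun x => arccos x⁻¹) (1 / (√(v ^ 2 - 1) * v)) v := by
  have hv0 : 0 < v := zero_lt_one.trans hv
  have hsqrt : √(1 - v⁻¹ ^ 2) = √(v ^ 2 - 1) / v := by
    rw [show 1 - v⁻¹ ^ 2 = (v ^ 2 - 1) / v ^ 2 by field_simp, sqrt_div' _ (sq_nonneg v),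
      sqrt_sq hv0.le]
  refine ((hasDerivAt_arccos (by linarith [inv_pos.2 hv0]) (inv_lt_one_of_one_lt₀ hv).ne).comp v
    (hasDerivAt_inv hv0.ne')).congr_deriv ?_
  rw [hsqrt]
  field_simp

lemma integrableOn_one_div_sqrt_sq_sub_one_mul :
    IntegrableOn (fun v : ℝ => 1 / (√(v ^ 2 - 1) * v)) (Ioi 1) := by
  refine integrableOn_Ioi_deriv_of_nonneg (g := fun x => arccos x⁻¹) ?_
    (fun v hv => hasDerivAt_arccos_inv hv) (fun v hv => ?_) (l := arccos 0) ?_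
  · exact (continuous_arccos.continuousAt.comp (continuousAt_inv₀ one_ne_zero)).continuousWithinAt
  · have : 0 < v := zero_lt_one.trans hv
    positivity
  · exact (continuous_arccos.tendsto 0).comp tendsto_inv_atTop_zero

lemma integrableOn_one_div_sqrt_pow_sub_one_mul {m : ℕ} (hm : 2 ≤ m) :
    IntegrableOn (fun v : ℝ => 1 / (√(v ^ m - 1) * v)) (Ioi 1) := by
  refine integrableOn_one_div_sqrt_sq_sub_one_mul.mono'
    (by fun_prop : Measurable _).aestronglyMeasurable <|
    ae_restrict_of_forall_mem measurableSet_Ioi fun v (hv : 1 < v) => ?_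
  have hv0 : 0 < v := zero_lt_one.trans hv
  have hsq : 0 < √(v ^ 2 - 1) := sqrt_pos.2 (by nlinarith)
  rw [norm_of_nonneg (by positivity)]
  gcongr
  exact hv.le

/-- the half-height `T(a) = sinh(a) ∫_1^∞ (v^{2n-2}-1)^{-1/2} (sinh²(a)v²+1)^{-1/2} dv`
is differentiable on `(0, ∞)`, with strictly positive derivative
`T'(a) = cosh(a) ∫_1^∞ (v^{2n-2}-1)^{-1/2} (sinh²(a)v²+1)^{-3/2} dv`; hence `T` is strictly
increasing on `(0, ∞)`. -/
theorem stmt_7 (n : ℕ) (hn : 2 ≤ n) :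
    (∀ a ∈ Set.Ioi (0 : ℝ),
      HasDerivAt
        (fun c => Real.sinh c *
          ∫ v in Set.Ioi (1 : ℝ),
            1 / (Real.sqrt (v ^ (2 * n - 2) - 1) * Real.sqrt (Real.sinh c ^ 2 * v ^ 2 + 1)))
        (Real.cosh a *
          ∫ v in Set.Ioi (1 : ℝ),
            1 / (Real.sqrt (v ^ (2 * n - 2) - 1) *
              Real.sqrt (Real.sinh a ^ 2 * v ^ 2 + 1) ^ 3)) a ∧
      0 < Real.cosh a *
          ∫ v in Set.Ioi (1 : ℝ),
            1 / (Real.sqrt (v ^ (2 * n - 2) - 1) *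
              Real.sqrt (Real.sinh a ^ 2 * v ^ 2 + 1) ^ 3)) ∧
    StrictMonoOn
      (fun a => Real.sinh a *
        ∫ v in Set.Ioi (1 : ℝ),
          1 / (Real.sqrt (v ^ (2 * n - 2) - 1) * Real.sqrt (Real.sinh a ^ 2 * v ^ 2 + 1)))
      (Set.Ioi 0) := by
  have hA_meas : Measurable fun v : ℝ => √(v ^ (2 * n - 2) - 1) := by fun_prop
  have hA : ∀ v ∈ Ioi (1 : ℝ), 0 < √(v ^ (2 * n - 2) - 1) := fun v (hv : 1 < v) =>
    sqrt_pos.2 (sub_pos.2 (one_lt_pow₀ hv (by omega)))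
  have hAint := integrableOn_one_div_sqrt_pow_sub_one_mul (m := 2 * n - 2) (by omega)
  have hderiv : ∀ a ∈ Ioi (0 : ℝ), _ := fun a ha =>
    hasDerivAt_sinh_mul_integral_one_div_mul_sqrt hA_meas hA hAint ha
  have hpos : ∀ a ∈ Ioi (0 : ℝ), _ := fun a (ha : 0 < a) => mul_pos (cosh_pos a)
    (setIntegral_one_div_mul_sqrt_pow_pos hA_meas hA hAint (sinh_pos_iff.2 ha) three_ne_zero)
  refine ⟨fun a ha => ⟨hderiv a ha, hpos a ha⟩, ?_⟩
  rw [← interior_Ioi] at hderiv hpos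
  exact strictMonoOn_of_hasDerivWithinAt_pos (convex_Ioi 0)
    (fun a ha => (hderiv a (by rwa [interior_Ioi])).continuousAt.continuousWithinAt)
    (fun a ha => (hderiv a ha).hasDerivWithinAt) hpos
end

section
/- For every integer n ≥ 2, the function T(a) = sinh(a) · ∫_1^∞ (v^{2n−2} − 1)^{−1/2} · (sinh²(a)·v² + 1)^{−1/2} dv satisfies lim_{a→0⁺} T(a) = 0 and lim_{a→∞} T(a) = π / (2(n−1)). -/
/-!
Put `m = n - 1` and `s = sinh a`. Then `T = ∫_1^∞ s / √(s²v² + 1) / √(v^{2m} - 1) dv`, and the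
factor `s / √(s²v² + 1)` lies in `[0, 1/v]`, tends to `0` as `s → 0` and to `1/v` as `s → ∞`.
The majorant `v⁻¹ / √(v^{2m} - 1)` has antiderivative `arccos (v^{-m}) / m`, so it is integrable
with integral `π / (2m)`, and dominated convergence gives both limits.
-/

open MeasureTheory Real Set Filter Topology

theorem hasDerivAt_arccos_inv_pow_div {m : ℕ} (hm : m ≠ 0) {x : ℝ} (hx : 1 < x) :
    HasDerivAt (fun v => arccos ((v ^ m)⁻¹) / m) (x⁻¹ / √(x ^ (2 * m) - 1)) x := by
  have hxm : 1 < x ^ m := one_lt_pow₀ hx hm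
  have hpos : 0 < (x ^ m)⁻¹ := by positivity
  have hderiv := ((hasDerivAt_arccos (by linarith) (inv_lt_one_of_one_lt₀ hxm).ne).comp x
    ((hasDerivAt_pow m x).inv (by positivity))).div_const (m : ℝ)
  refine hderiv.congr_deriv ?_
  have hsqrt : √(1 - ((x ^ m)⁻¹) ^ 2) = √(x ^ (2 * m) - 1) / x ^ m := by
    have h : 1 - ((x ^ m)⁻¹) ^ 2 = (x ^ (2 * m) - 1) / (x ^ m) ^ 2 := by
      rw [pow_mul']
      field_simp
    rw [h, sqrt_div' _ (by positivity), sqrt_sq (by positivity)]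
  have hS : 0 < √(x ^ (2 * m) - 1) :=
    sqrt_pos.2 (by linarith [one_lt_pow₀ hx (by omega : 2 * m ≠ 0)])
  rw [hsqrt, ← pow_sub_one_mul hm x]
  field_simp

section ImproperIntegral

variable {m : ℕ}

theorem continuousWithinAt_arccos_inv_pow_div :
    ContinuousWithinAt (fun v : ℝ => arccos ((v ^ m)⁻¹) / m) (Ici 1) 1 := by
  refine ContinuousAt.continuousWithinAt ?_
  exact (continuous_arccos.continuousAt.comp ((continuousAt_pow 1 m).inv₀ (by simp))).div_const _

theorem tendsto_arccos_inv_pow_div_atTop (hm : m ≠ 0) :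
    Tendsto (fun v : ℝ => arccos ((v ^ m)⁻¹) / m) atTop (𝓝 (π / (2 * m))) := by
  have h := ((continuous_arccos.tendsto 0).comp
    (tendsto_pow_atTop hm).inv_tendsto_atTop).div_const (m : ℝ)
  rw [arccos_zero, div_div] at h
  exact h

theorem inv_div_sqrt_pow_sub_one_nonneg {v : ℝ} (hv : 0 < v) :
    0 ≤ v⁻¹ / √(v ^ (2 * m) - 1) := by
  positivity

theorem integrableOn_Ioi_one_inv_div_sqrt_pow_sub_one (hm : m ≠ 0) :
    IntegrableOn (fun v : ℝ => v⁻¹ / √(v ^ (2 * m) - 1)) (Ioi 1) :=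
  integrableOn_Ioi_deriv_of_nonneg continuousWithinAt_arccos_inv_pow_div
    (fun _ hx => hasDerivAt_arccos_inv_pow_div hm hx)
    (fun _ hx => inv_div_sqrt_pow_sub_one_nonneg (zero_lt_one.trans hx))
    (tendsto_arccos_inv_pow_div_atTop hm)

theorem integral_Ioi_one_inv_div_sqrt_pow_sub_one (hm : m ≠ 0) :
    ∫ v in Ioi (1 : ℝ), v⁻¹ / √(v ^ (2 * m) - 1) = π / (2 * m) := by
  rw [integral_Ioi_of_hasDerivAt_of_nonneg continuousWithinAt_arccos_inv_pow_div
    (fun _ hx => hasDerivAt_arccos_inv_pow_div hm hx)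
    (fun _ hx => inv_div_sqrt_pow_sub_one_nonneg (zero_lt_one.trans hx))
    (tendsto_arccos_inv_pow_div_atTop hm)]
  simp

end ImproperIntegral

theorem div_sqrt_sq_mul_sq_add_one_le_inv {s v : ℝ} (hs : 0 ≤ s) (hv : 0 < v) :
    s / √(s ^ 2 * v ^ 2 + 1) ≤ v⁻¹ := by
  rw [div_le_iff₀ (by positivity), inv_mul_eq_div, le_div_iff₀ hv]
  calc s * v = √((s * v) ^ 2) := (sqrt_sq (by positivity)).symm
    _ ≤ √(s ^ 2 * v ^ 2 + 1) := sqrt_le_sqrt (by rw [mul_pow]; linarith)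

theorem tendsto_div_sqrt_sq_mul_sq_add_one_atTop {v : ℝ} (hv : 0 < v) :
    Tendsto (fun s => s / √(s ^ 2 * v ^ 2 + 1)) atTop (𝓝 v⁻¹) := by
  have hlim : Tendsto (fun s : ℝ => (√(v ^ 2 + s⁻¹ ^ 2))⁻¹) atTop (𝓝 v⁻¹) := by
    have := (((tendsto_inv_atTop_zero.pow 2).const_add (v ^ 2)).sqrt).inv₀ (by positivity)
    simpa [sqrt_sq hv.le] using this
  refine hlim.congr' ?_
  filter_upwards [eventually_gt_atTop 0] with s hs
  rw [show s ^ 2 * v ^ 2 + 1 = s ^ 2 * (v ^ 2 + s⁻¹ ^ 2) by field_simp, sqrt_mul (sq_nonneg s),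
    sqrt_sq hs.le]
  field_simp

/-- With `m = n - 1`, the half-height of the catenoid `C_a` is `catenoidHeight m (sinh a)`. -/
noncomputable def catenoidHeight (m : ℕ) (s : ℝ) : ℝ :=
  ∫ v in Ioi (1 : ℝ), s / √(s ^ 2 * v ^ 2 + 1) / √(v ^ (2 * m) - 1)

section CatenoidHeight

variable {m : ℕ}

theorem tendsto_catenoidHeight {l : Filter ℝ} [l.IsCountablyGenerated] {g : ℝ → ℝ} (hm : m ≠ 0)
    (hl : ∀ᶠ s in l, 0 ≤ s)
    (hg : ∀ v, 1 < v → Tendsto (fun s => s / √(s ^ 2 * v ^ 2 + 1)) l (𝓝 (g v))) :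
    Tendsto (catenoidHeight m) l (𝓝 (∫ v in Ioi 1, g v / √(v ^ (2 * m) - 1))) := by
  refine tendsto_integral_filter_of_dominated_convergence (fun v => v⁻¹ / √(v ^ (2 * m) - 1))
    (.of_forall fun s => (by fun_prop : Measurable _).aestronglyMeasurable) ?_
    (integrableOn_Ioi_one_inv_div_sqrt_pow_sub_one hm) ?_
  · filter_upwards [hl] with s hs
    refine (ae_restrict_iff' measurableSet_Ioi).2 (.of_forall fun v (hv : 1 < v) => ?_)
    rw [norm_of_nonneg (by positivity)]
    exact div_le_div_of_nonneg_right
      (div_sqrt_sq_mul_sq_add_one_le_inv hs (zero_lt_one.trans hv)) (sqrt_nonneg _)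
  · exact (ae_restrict_iff' measurableSet_Ioi).2 (.of_forall fun v hv => (hg v hv).div_const _)

theorem tendsto_catenoidHeight_nhdsGT_zero (hm : m ≠ 0) :
    Tendsto (catenoidHeight m) (𝓝[>] 0) (𝓝 0) := by
  have hcont (v : ℝ) : Continuous fun s : ℝ => s / √(s ^ 2 * v ^ 2 + 1) :=
    continuous_id.div (by fun_prop) fun s => (sqrt_pos.2 (by positivity)).ne'
  simpa using tendsto_catenoidHeight (l := 𝓝[>] 0) (g := 0) hm
    (eventually_nhdsWithin_of_forall fun _ hs => le_of_lt hs)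
    fun v _ => by simpa using ((hcont v).tendsto 0).mono_left nhdsWithin_le_nhds

theorem tendsto_catenoidHeight_atTop (hm : m ≠ 0) :
    Tendsto (catenoidHeight m) atTop (𝓝 (π / (2 * m))) := by
  rw [← integral_Ioi_one_inv_div_sqrt_pow_sub_one hm]
  exact tendsto_catenoidHeight hm (eventually_ge_atTop 0)
    fun v hv => tendsto_div_sqrt_sq_mul_sq_add_one_atTop (zero_lt_one.trans hv)

end CatenoidHeight

theorem tendsto_sinh_nhdsGT_zero : Tendsto sinh (𝓝[>] 0) (𝓝[>] 0) := by
  have h := continuous_sinh.continuousWithinAt.tendsto_nhdsWithin (x := 0) (s := Ioi 0)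
    (t := Ioi 0) fun _ hx => sinh_pos_iff.2 hx
  rwa [sinh_zero] at h

theorem tendsto_sinh_atTop : Tendsto sinh atTop atTop :=
  tendsto_atTop_mono' atTop ((eventually_ge_atTop 0).mono fun _ => self_le_sinh_iff.2) tendsto_id

/-- the half-height `T(a) = sinh(a) ∫_1^∞ (v^{2n-2}-1)^{-1/2} (sinh²(a)v²+1)^{-1/2} dv`
satisfies `T(a) → 0` as `a → 0⁺` and `T(a) → π / (2(n-1))` as `a → ∞`. -/
theorem stmt_8 (n : ℕ) (hn : 2 ≤ n) :
    Filter.Tendsto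
      (fun a => Real.sinh a *
        ∫ v in Set.Ioi (1 : ℝ),
          1 / (Real.sqrt (v ^ (2 * n - 2) - 1) * Real.sqrt (Real.sinh a ^ 2 * v ^ 2 + 1)))
      (nhdsWithin 0 (Set.Ioi 0)) (nhds 0) ∧
    Filter.Tendsto
      (fun a => Real.sinh a *
        ∫ v in Set.Ioi (1 : ℝ),
          1 / (Real.sqrt (v ^ (2 * n - 2) - 1) * Real.sqrt (Real.sinh a ^ 2 * v ^ 2 + 1)))
      Filter.atTop (nhds (Real.pi / (2 * ((n : ℝ) - 1)))) := by
  obtain ⟨m, rfl⟩ : ∃ m, n = m + 1 := ⟨n - 1, by omega⟩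
  have hm : m ≠ 0 := by omega
  have hT : (fun a => sinh a * ∫ v in Ioi (1 : ℝ),
      1 / (√(v ^ (2 * (m + 1) - 2) - 1) * √(sinh a ^ 2 * v ^ 2 + 1))) =
      catenoidHeight m ∘ sinh := by
    funext a
    rw [Function.comp_apply, catenoidHeight, ← integral_const_mul,
      show 2 * (m + 1) - 2 = 2 * m by omega]
    congr 1 with v
    ring
  rw [hT, Nat.cast_add_one, add_sub_cancel_right]
  exact ⟨(tendsto_catenoidHeight_nhdsGT_zero hm).comp tendsto_sinh_nhdsGT_zero,
    (tendsto_catenoidHeight_atTop hm).comp tendsto_sinh_atTop⟩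
end

section
/- For every integer n ≥ 2 and every a > 0, the vertical height h_R(a) = 2·sinh^{n−1}(a) · ∫_a^∞ (sinh^{2n−2}(u) − sinh^{2n−2}(a))^{−1/2} du of the n-dimensional catenoid C_a satisfies h_R(a) < π / (n−1). -/
/-
With `m = n - 1` and `c = sinh^m a`, the function `u ↦ -arcsin (c / sinh^m u)` rises from `-π/2`
at `u = a` to `0` at infinity, and its derivative `m c cosh u / (sinh u √(sinh^{2m} u - c²))`
strictly exceeds `m c / √(sinh^{2m} u - c²)` because `cosh > sinh`. Integrating over `(a, ∞)` gives
`m c ∫ (sinh^{2m} u - c²)^{-1/2} du < π/2`.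
-/

open MeasureTheory Real Set Filter Topology

theorem setIntegral_lt_setIntegral_of_forall_lt {X : Type*} [MeasurableSpace X] {μ : Measure X}
    {s : Set X} {f g : X → ℝ} (hs : MeasurableSet s) (hμs : μ s ≠ 0)
    (hf : IntegrableOn f s μ) (hg : IntegrableOn g s μ) (hlt : ∀ x ∈ s, f x < g x) :
    ∫ x in s, f x ∂μ < ∫ x in s, g x ∂μ := by
  rw [← sub_pos, ← integral_sub hg hf]
  have hpos : ∀ x ∈ s, 0 < g x - f x := fun x hx => sub_pos.2 (hlt x hx)
  rw [setIntegral_pos_iff_support_of_nonneg_ae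
    ((ae_restrict_iff' hs).2 (ae_of_all _ fun x hx => (hpos x hx).le)) (hg.sub hf)]
  rwa [inter_eq_self_of_subset_right fun x hx => Function.mem_support.2 (hpos x hx).ne',
    pos_iff_ne_zero]

section ArcsecSubstitution

variable {φ φ' : ℝ → ℝ} {a c : ℝ}

theorem hasDerivAt_arcsin_const_div {u d : ℝ} (hc : 0 < c) (hcu : c < φ u)
    (hφ : HasDerivAt φ d u) :
    HasDerivAt (fun x => arcsin (c / φ x)) (-(c * d / (φ u * √(φ u ^ 2 - c ^ 2)))) u := by
  have hφu : 0 < φ u := hc.trans hcu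
  have hratio : c / φ u < 1 := (div_lt_one hφu).2 hcu
  refine ((hasDerivAt_arcsin (by linarith [div_pos hc hφu]) hratio.ne).comp u
    ((hasDerivAt_const u c).div hφ hφu.ne')).congr_deriv ?_
  have hsq : √(1 - (c / φ u) ^ 2) = √(φ u ^ 2 - c ^ 2) / φ u := by
    rw [show 1 - (c / φ u) ^ 2 = (φ u ^ 2 - c ^ 2) / φ u ^ 2 by field_simp,
      sqrt_div' _ (sq_nonneg _), sqrt_sq hφu.le]
  have hroot : 0 < √(φ u ^ 2 - c ^ 2) := sqrt_pos.2 (by nlinarith)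
  rw [hsq]
  field_simp
  ring

/-- `u ↦ c φ'(u) / (φ(u) √(φ(u)² - c²))` is the derivative of `arcsec (φ / c)`, which runs from
`0` to `π/2` when `φ` increases from `c` to `∞`. -/
theorem integrableOn_Ioi_and_integral_Ioi_arcsec_deriv (hc : 0 < c) (hφa : φ a = c)
    (hcont : ContinuousWithinAt φ (Ici a) a) (hlt : ∀ u ∈ Ioi a, c < φ u)
    (hderiv : ∀ u ∈ Ioi a, HasDerivAt φ (φ' u) u) (hmono : ∀ u ∈ Ioi a, 0 ≤ φ' u)
    (htop : Tendsto φ atTop atTop) :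
    IntegrableOn (fun u => c * φ' u / (φ u * √(φ u ^ 2 - c ^ 2))) (Ioi a) ∧
      ∫ u in Ioi a, c * φ' u / (φ u * √(φ u ^ 2 - c ^ 2)) = π / 2 := by
  set g : ℝ → ℝ := fun x => -arcsin (c / φ x)
  have hgcont : ContinuousWithinAt g (Ici a) a :=
    (continuous_arcsin.continuousAt.comp_continuousWithinAt
      (continuousWithinAt_const.div hcont (hφa ▸ hc.ne'))).neg
  have hgderiv : ∀ u ∈ Ioi a, HasDerivAt g (c * φ' u / (φ u * √(φ u ^ 2 - c ^ 2))) u :=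
    fun u hu => (hasDerivAt_arcsin_const_div hc (hlt u hu) (hderiv u hu)).neg.congr_deriv
      (neg_neg _)
  have hnonneg : ∀ u ∈ Ioi a, 0 ≤ c * φ' u / (φ u * √(φ u ^ 2 - c ^ 2)) := fun u hu =>
    div_nonneg (mul_nonneg hc.le (hmono u hu)) (mul_nonneg (hc.trans (hlt u hu)).le (sqrt_nonneg _))
  have hglim : Tendsto g atTop (𝓝 0) := by
    simpa [g] using ((continuous_arcsin.tendsto 0).comp (tendsto_const_nhds.div_atTop htop)).neg
  refine ⟨integrableOn_Ioi_deriv_of_nonneg hgcont hgderiv hnonneg hglim, ?_⟩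
  rw [integral_Ioi_of_hasDerivAt_of_nonneg hgcont hgderiv hnonneg hglim]
  simp [g, hφa, div_self hc.ne']

end ArcsecSubstitution

theorem mul_div_sqrt_lt_sinh_pow_arcsec_deriv {m : ℕ} (hm : m ≠ 0) {u c : ℝ} (hu : 0 < u)
    (hc : 0 < c) (hcu : c < sinh u ^ m) :
    m * c * (1 / √((sinh u ^ m) ^ 2 - c ^ 2)) <
      c * (m * sinh u ^ (m - 1) * cosh u) / (sinh u ^ m * √((sinh u ^ m) ^ 2 - c ^ 2)) := by
  have hsinh : 0 < sinh u := sinh_pos_iff.2 hu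
  have hroot : 0 < √((sinh u ^ m) ^ 2 - c ^ 2) := sqrt_pos.2 (by nlinarith)
  have hmc : 0 < (m : ℝ) * c := mul_pos (by positivity) hc
  have hsplit : sinh u ^ m = sinh u ^ (m - 1) * sinh u := by
    rw [← pow_succ, Nat.sub_add_cancel (Nat.one_le_iff_ne_zero.2 hm)]
  calc (m : ℝ) * c * (1 / √((sinh u ^ m) ^ 2 - c ^ 2))
      = m * c * sinh u / (sinh u * √((sinh u ^ m) ^ 2 - c ^ 2)) := by field_simp
    _ < m * c * cosh u / (sinh u * √((sinh u ^ m) ^ 2 - c ^ 2)) := by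
      gcongr
      exact sinh_lt_cosh u
    _ = _ := by
      rw [hsplit]
      field_simp

theorem mul_integral_Ioi_one_div_sqrt_sinh_pow_sq_sub_lt {m : ℕ} (hm : m ≠ 0) {a : ℝ}
    (ha : 0 < a) :
    m * sinh a ^ m * ∫ u in Ioi a, 1 / √((sinh u ^ m) ^ 2 - (sinh a ^ m) ^ 2) < π / 2 := by
  set c := sinh a ^ m
  have hc : 0 < c := pow_pos (sinh_pos_iff.2 ha) m
  have hlt : ∀ u ∈ Ioi a, c < sinh u ^ m := fun u hu =>
    pow_lt_pow_left₀ (sinh_lt_sinh.2 hu) (sinh_pos_iff.2 ha).le hm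
  obtain ⟨hint, hval⟩ := integrableOn_Ioi_and_integral_Ioi_arcsec_deriv
    (φ := fun u => sinh u ^ m) (φ' := fun u => m * sinh u ^ (m - 1) * cosh u) hc rfl
    (continuous_sinh.pow m).continuousWithinAt hlt (fun u _ => (hasDerivAt_sinh u).pow m)
    (fun u hu => by have := sinh_pos_iff.2 (ha.trans hu); positivity)
    ((tendsto_pow_atTop hm).comp tendsto_sinh_atTop)
  have hcomp : ∀ u ∈ Ioi a, m * c * (1 / √((sinh u ^ m) ^ 2 - c ^ 2)) <
      c * (m * sinh u ^ (m - 1) * cosh u) / (sinh u ^ m * √((sinh u ^ m) ^ 2 - c ^ 2)) :=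
    fun u hu => mul_div_sqrt_lt_sinh_pow_arcsec_deriv hm (ha.trans hu) hc (hlt u hu)
  have hcont : ContinuousOn (fun u => m * c * (1 / √((sinh u ^ m) ^ 2 - c ^ 2))) (Ioi a) :=
    continuousOn_const.mul <| continuousOn_const.div (by fun_prop) fun u hu =>
      (sqrt_pos.2 (by nlinarith [hlt u hu])).ne'
  have hfint : IntegrableOn (fun u => m * c * (1 / √((sinh u ^ m) ^ 2 - c ^ 2))) (Ioi a) :=
    hint.mono' (hcont.aestronglyMeasurable measurableSet_Ioi) <|
      (ae_restrict_iff' measurableSet_Ioi).2 <| ae_of_all _ fun u hu => by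
        rw [norm_of_nonneg (by positivity)]
        exact (hcomp u hu).le
  rw [← integral_const_mul, ← hval]
  exact setIntegral_lt_setIntegral_of_forall_lt measurableSet_Ioi (by simp) hfint hint hcomp

/-- the vertical height
`h_R(a) = 2 sinh^{n-1}(a) ∫_a^∞ (sinh^{2n-2}(u) - sinh^{2n-2}(a))^{-1/2} du`
of the `n`-dimensional catenoid satisfies `h_R(a) < π / (n-1)`. -/
theorem stmt_10 (n : ℕ) (hn : 2 ≤ n) (a : ℝ) (ha : 0 < a) :
    2 * (Real.sinh a ^ (n - 1) *
        ∫ u in Set.Ioi a,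
          1 / Real.sqrt (Real.sinh u ^ (2 * n - 2) - Real.sinh a ^ (2 * n - 2))) <
      Real.pi / ((n : ℝ) - 1) := by
  obtain ⟨m, rfl⟩ : ∃ m, n = m + 1 := ⟨n - 1, by omega⟩
  have hbound := mul_integral_Ioi_one_div_sqrt_sinh_pow_sq_sub_lt (m := m) (by omega) ha
  have hm : (0 : ℝ) < m := by exact_mod_cast (by omega : 0 < m)
  simp_rw [show 2 * (m + 1) - 2 = m * 2 by omega, pow_mul, Nat.add_sub_cancel]
  rw [Nat.cast_succ, add_sub_cancel_right, lt_div_iff₀ hm]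
  linarith
end

section
/- Let n ≥ 2 be an integer and let 0 < a < b. Then there exists a unique ρ₀ ∈ (b, ∞) such that λ(a, ρ₀) = λ(b, ρ₀); moreover λ(a, ρ) > λ(b, ρ) for ρ ∈ (b, ρ₀) and λ(a, ρ) < λ(b, ρ) for ρ ∈ (ρ₀, ∞). (Equivalently: the generating catenaries C_a and C_b intersect at exactly two symmetric points.) -/
open MeasureTheory

/-- `λ(c, ρ)`: the height of the upper generating catenary of the catenoid `C_c` in
`ℍⁿ × ℝ` at hyperbolic distance `ρ` from the axis. -/
noncomputable def lam (n : ℕ) (c ρ : ℝ) : ℝ :=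
  Real.sinh c ^ (n - 1) *
    ∫ u in c..ρ, 1 / Real.sqrt (Real.sinh u ^ (2 * n - 2) - Real.sinh c ^ (2 * n - 2))

/-!
With `m = n - 1` and `φ t = (t ^ (2m) - 1) ^ (-1/2)`, strictly decreasing on `(1, ∞)`,
`λ(c, ρ) = ∫_c^ρ φ (sinh u / sinh c) du`, with a singularity of order `(u - c) ^ (-1/2)` at `c`.

Since `sinh u / sinh a > sinh u / sinh b`, the slope of `λ(a, ·)` is smaller than that of
`λ(b, ·)` on `(b, ∞)`, so `λ(a, ·) - λ(b, ·)` is strictly decreasing there; it is positive at `b`.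
To see that it becomes negative, translate both catenaries to start at `0`: as
`sinh (c + v) / sinh c` decreases in `c`, `λ(b, b + L) - λ(a, a + L)` increases in `L` and is at
least some `δ > 0` for `L ≥ 1`. Over `[ρ, ρ + (b - a)]` the function `λ(b, ·)` grows by at most
`(b - a) φ (sinh ρ / sinh b) → 0`, hence `λ(a, ρ) < λ(b, ρ)` for large `ρ`. The intermediate
value theorem then produces the unique crossing point.
-/

open Real Set Filter Topology

lemma strictAntiOn_one_div_sqrt_pow_sub_one {m : ℕ} (hm : m ≠ 0) :
    StrictAntiOn (fun t : ℝ => 1 / √(t ^ (2 * m) - 1)) (Ioi 1) := by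
  intro s hs t ht hst
  have hs1 : 1 < s ^ (2 * m) := one_lt_pow₀ hs (by omega)
  have hpow : s ^ (2 * m) < t ^ (2 * m) :=
    pow_lt_pow_left₀ hst (zero_le_one.trans hs.le) (by omega)
  exact one_div_lt_one_div_of_lt (sqrt_pos.2 (by linarith))
    (sqrt_lt_sqrt (by linarith) (by linarith))

lemma tendsto_one_div_sqrt_pow_sub_one {m : ℕ} (hm : m ≠ 0) :
    Tendsto (fun t : ℝ => 1 / √(t ^ (2 * m) - 1)) atTop (𝓝 0) := by
  simp only [one_div]
  exact tendsto_inv_atTop_zero.comp <| tendsto_sqrt_atTop.comp <|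
    tendsto_atTop_add_const_right _ _ (tendsto_pow_atTop (by omega))

/-- `∂λ/∂ρ` at `ρ = u` for `m = n - 1`. -/
noncomputable def catenarySlope (m : ℕ) (c u : ℝ) : ℝ :=
  1 / √((sinh u / sinh c) ^ (2 * m) - 1)

lemma one_lt_sinh_div_sinh {c u : ℝ} (hc : 0 < c) (hcu : c < u) : 1 < sinh u / sinh c :=
  (one_lt_div (sinh_pos_iff.2 hc)).2 (sinh_lt_sinh.2 hcu)

lemma sinh_add_div_sinh_lt {a b v : ℝ} (ha : 0 < a) (hab : a < b) (hv : 0 < v) :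
    sinh (b + v) / sinh b < sinh (a + v) / sinh a := by
  rw [div_lt_div_iff₀ (sinh_pos_iff.2 (ha.trans hab)) (sinh_pos_iff.2 ha), sinh_add, sinh_add]
  have hsub : sinh (a - b) < 0 := sinh_neg_iff.2 (by linarith)
  rw [sinh_sub] at hsub
  nlinarith [sinh_pos_iff.2 hv]

lemma catenarySlope_lt_catenarySlope {m : ℕ} (hm : m ≠ 0) {c c' u u' : ℝ}
    (h1 : 1 < sinh u' / sinh c') (h : sinh u' / sinh c' < sinh u / sinh c) :
    catenarySlope m c u < catenarySlope m c' u' :=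
  strictAntiOn_one_div_sqrt_pow_sub_one hm h1 (h1.trans h) h

lemma catenarySlope_pos {m : ℕ} (hm : m ≠ 0) {c u : ℝ} (hc : 0 < c) (hcu : c < u) :
    0 < catenarySlope m c u := by
  have := one_lt_pow₀ (one_lt_sinh_div_sinh hc hcu) (show 2 * m ≠ 0 by omega)
  unfold catenarySlope
  exact one_div_pos.2 (sqrt_pos.2 (by linarith))

lemma antitoneOn_catenarySlope {m : ℕ} (hm : m ≠ 0) {c : ℝ} (hc : 0 < c) :
    AntitoneOn (catenarySlope m c) (Ioi c) := by
  intro u hu u' hu' huu'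
  rcases huu'.eq_or_lt with rfl | hlt
  · exact le_rfl
  · exact (catenarySlope_lt_catenarySlope hm (one_lt_sinh_div_sinh hc hu)
      (div_lt_div_of_pos_right (sinh_lt_sinh.2 hlt) (sinh_pos_iff.2 hc))).le

lemma tendsto_catenarySlope_atTop {m : ℕ} (hm : m ≠ 0) {c : ℝ} (hc : 0 < c) :
    Tendsto (catenarySlope m c) atTop (𝓝 0) := by
  have hratio : Tendsto (fun u => sinh u / sinh c) atTop atTop := by
    refine tendsto_atTop_mono' _ ?_ (tendsto_id.atTop_div_const (sinh_pos_iff.2 hc))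
    filter_upwards [eventually_ge_atTop 0] with u hu
    exact div_le_div_of_nonneg_right (self_le_sinh_iff.2 hu) (sinh_pos_iff.2 hc).le
  exact (tendsto_one_div_sqrt_pow_sub_one hm).comp hratio

lemma intervalIntegrable_inv_sqrt_sub (c ρ : ℝ) :
    IntervalIntegrable (fun u => (√(u - c))⁻¹) volume c ρ := by
  have hderiv : ∀ u ≠ c, HasDerivAt (fun u => 2 * √(u - c)) (√(u - c))⁻¹ u := by
    intro u hu
    have h := (((hasDerivAt_id' u).sub_const c).sqrt (sub_ne_zero.2 hu)).const_mul 2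
    rwa [show 2 * (1 / (2 * √(u - c))) = (√(u - c))⁻¹ by ring] at h
  refine intervalIntegral.intervalIntegrable_deriv_of_nonneg (g := fun u => 2 * √(u - c))
    (by fun_prop) (fun u hu => hderiv u ?_) (fun u _ => by positivity)
  rcases le_total c ρ with h | h
  · exact (min_eq_left h ▸ hu.1).ne'
  · exact (max_eq_left h ▸ hu.2).ne

lemma catenarySlope_le {m : ℕ} (hm : m ≠ 0) {c u : ℝ} (hc : 0 < c) (hcu : c < u) :
    catenarySlope m c u ≤ √(sinh c) * (√(u - c))⁻¹ := by
  have hs : 0 < sinh c := sinh_pos_iff.2 hc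
  have hr := one_lt_sinh_div_sinh hc hcu
  have hsinh : u - c ≤ sinh u - sinh c := by
    linarith [sinh_sub_id_strictMono.monotone hcu.le]
  have hlow : (u - c) / sinh c ≤ (sinh u / sinh c) ^ (2 * m) - 1 :=
    calc (u - c) / sinh c ≤ (sinh u - sinh c) / sinh c := by gcongr
      _ = sinh u / sinh c - 1 := by field_simp
      _ ≤ (sinh u / sinh c) ^ (2 * m) - 1 := by
        gcongr; exact le_self_pow₀ hr.le (by omega)
  calc catenarySlope m c u ≤ 1 / √((u - c) / sinh c) :=
        one_div_le_one_div_of_le (sqrt_pos.2 (div_pos (by linarith) hs)) (sqrt_le_sqrt hlow)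
    _ = √(sinh c) * (√(u - c))⁻¹ := by rw [sqrt_div' _ hs.le, one_div_div, div_eq_mul_inv]

lemma intervalIntegrable_catenarySlope {m : ℕ} (hm : m ≠ 0) {c x y : ℝ} (hc : 0 < c)
    (hx : c ≤ x) (hy : c ≤ y) : IntervalIntegrable (catenarySlope m c) volume x y := by
  have hfrom : ∀ ρ, c ≤ ρ → IntervalIntegrable (catenarySlope m c) volume c ρ := by
    intro ρ hρ
    refine ((intervalIntegrable_inv_sqrt_sub c ρ).const_mul (√(sinh c))).mono_fun
      (by unfold catenarySlope; fun_prop : Measurable (catenarySlope m c)).aestronglyMeasurable ?_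
    rw [EventuallyLE, ae_restrict_iff' measurableSet_uIoc]
    filter_upwards with u hu
    rw [uIoc_of_le hρ] at hu
    rw [norm_of_nonneg (by unfold catenarySlope; positivity), norm_of_nonneg (by positivity)]
    exact catenarySlope_le hm hc hu.1
  exact (hfrom x hx).symm.trans (hfrom y hy)

lemma lam_eq_integral_catenarySlope (n : ℕ) {c : ℝ} (hc : 0 < c) (ρ : ℝ) :
    lam n c ρ = ∫ u in c..ρ, catenarySlope (n - 1) c u := by
  have hs : 0 < sinh c := sinh_pos_iff.2 hc
  unfold lam catenarySlope
  rw [← intervalIntegral.integral_const_mul, show 2 * n - 2 = 2 * (n - 1) by omega]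
  congr 1
  funext u
  have hpow : sinh c ^ (2 * (n - 1)) = (sinh c ^ (n - 1)) ^ 2 := by ring
  have hratio : (sinh u / sinh c) ^ (2 * (n - 1)) - 1
      = (sinh u ^ (2 * (n - 1)) - sinh c ^ (2 * (n - 1))) / (sinh c ^ (n - 1)) ^ 2 := by
    rw [div_pow, ← hpow]
    field_simp
  rw [hratio, sqrt_div' _ (by positivity), sqrt_sq (by positivity), one_div_div, mul_one_div]

@[simp]
lemma lam_self (n : ℕ) (c : ℝ) : lam n c c = 0 := by
  simp [lam]

lemma lam_sub_lam {n : ℕ} (hn : 2 ≤ n) {c x y : ℝ} (hc : 0 < c) (hx : c ≤ x)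
    (hy : c ≤ y) :
    lam n c y - lam n c x = ∫ u in x..y, catenarySlope (n - 1) c u := by
  have hm : n - 1 ≠ 0 := by omega
  rw [lam_eq_integral_catenarySlope n hc, lam_eq_integral_catenarySlope n hc,
    intervalIntegral.integral_interval_sub_left
      (intervalIntegrable_catenarySlope hm hc le_rfl hy)
      (intervalIntegrable_catenarySlope hm hc le_rfl hx)]

lemma strictMonoOn_lam {n : ℕ} (hn : 2 ≤ n) {c : ℝ} (hc : 0 < c) :
    StrictMonoOn (lam n c) (Ici c) := by
  intro x hx y hy hxy
  have hm : n - 1 ≠ 0 := by omega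
  have hpos : 0 < ∫ u in x..y, catenarySlope (n - 1) c u :=
    intervalIntegral.intervalIntegral_pos_of_pos_on (intervalIntegrable_catenarySlope hm hc hx hy)
      (fun u hu => catenarySlope_pos hm hc (lt_of_le_of_lt hx hu.1)) hxy
  linarith [lam_sub_lam hn hc hx hy]

lemma continuousOn_lam {n : ℕ} (hn : 2 ≤ n) {c : ℝ} (hc : 0 < c) :
    ContinuousOn (lam n c) (Ici c) := by
  intro x hx
  have hcx : c ≤ x + 1 := by linarith [mem_Ici.1 hx]
  have hprim := intervalIntegral.continuousOn_primitive_interval'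
    (intervalIntegrable_catenarySlope (by omega : n - 1 ≠ 0) hc le_rfl hcx) left_mem_uIcc
  rw [uIcc_of_le hcx] at hprim
  rw [funext (lam_eq_integral_catenarySlope n hc)]
  exact (hprim x ⟨hx, by linarith⟩).mono_of_mem_nhdsWithin
    (by rw [← Ici_inter_Iic]; exact inter_mem_nhdsWithin _ (Iic_mem_nhds (by linarith)))

lemma strictAntiOn_lam_sub_lam {n : ℕ} (hn : 2 ≤ n) {a b : ℝ} (ha : 0 < a) (hab : a < b) :
    StrictAntiOn (fun ρ => lam n a ρ - lam n b ρ) (Ici b) := by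
  intro x hx y hy hxy
  have hm : n - 1 ≠ 0 := by omega
  have hb : 0 < b := ha.trans hab
  have hIa := intervalIntegrable_catenarySlope hm ha (hab.le.trans hx) (hab.le.trans hy)
  have hIb := intervalIntegrable_catenarySlope hm hb hx hy
  have hpos : 0 < ∫ u in x..y, (catenarySlope (n - 1) b u - catenarySlope (n - 1) a u) := by
    refine intervalIntegral.intervalIntegral_pos_of_pos_on (hIb.sub hIa) (fun u hu => ?_) hxy
    have hbu : b < u := lt_of_le_of_lt hx hu.1
    exact sub_pos.2 (catenarySlope_lt_catenarySlope hm (one_lt_sinh_div_sinh hb hbu)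
      (div_lt_div_of_pos_left (sinh_pos_iff.2 (hb.trans hbu)) (sinh_pos_iff.2 ha)
        (sinh_lt_sinh.2 hab)))
  rw [intervalIntegral.integral_sub hIb hIa, ← lam_sub_lam hn hb hx hy,
    ← lam_sub_lam hn ha (hab.le.trans hx) (hab.le.trans hy)] at hpos
  linarith

lemma lam_add_sub_lam_add {n : ℕ} (hn : 2 ≤ n) {c s t : ℝ} (hc : 0 < c) (hs : 0 ≤ s)
    (ht : 0 ≤ t) :
    lam n c (c + t) - lam n c (c + s) = ∫ v in s..t, catenarySlope (n - 1) c (c + v) := by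
  rw [lam_sub_lam hn hc (by linarith) (by linarith),
    intervalIntegral.integral_comp_add_left (catenarySlope (n - 1) c)]

lemma strictMonoOn_lam_add_sub_lam_add {n : ℕ} (hn : 2 ≤ n) {a b : ℝ} (ha : 0 < a)
    (hab : a < b) : StrictMonoOn (fun L => lam n b (b + L) - lam n a (a + L)) (Ici 0) := by
  intro s hs t ht hst
  have hm : n - 1 ≠ 0 := by omega
  have hb : 0 < b := ha.trans hab
  have hshift : ∀ {c}, 0 < c →
      IntervalIntegrable (fun v => catenarySlope (n - 1) c (c + v)) volume s t := by
    intro c hc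
    simpa using (intervalIntegrable_catenarySlope hm hc (x := c + s) (y := c + t)
      (by linarith [mem_Ici.1 hs]) (by linarith [mem_Ici.1 ht])).comp_add_left c
  have hpos : 0 < ∫ v in s..t,
      (catenarySlope (n - 1) b (b + v) - catenarySlope (n - 1) a (a + v)) := by
    refine intervalIntegral.intervalIntegral_pos_of_pos_on ((hshift hb).sub (hshift ha))
      (fun v hv => ?_) hst
    have hv : 0 < v := lt_of_le_of_lt hs hv.1
    exact sub_pos.2 (catenarySlope_lt_catenarySlope hm
      (one_lt_sinh_div_sinh hb (lt_add_of_pos_right b hv)) (sinh_add_div_sinh_lt ha hab hv))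
  rw [intervalIntegral.integral_sub (hshift hb) (hshift ha),
    ← lam_add_sub_lam_add hn hb hs ht, ← lam_add_sub_lam_add hn ha hs ht] at hpos
  linarith

lemma lam_sub_lam_le {n : ℕ} (hn : 2 ≤ n) {c x y : ℝ} (hc : 0 < c) (hx : c < x)
    (hxy : x ≤ y) :
    lam n c y - lam n c x ≤ (y - x) * catenarySlope (n - 1) c x := by
  have hm : n - 1 ≠ 0 := by omega
  have hmono := intervalIntegral.integral_mono_on hxy
    (intervalIntegrable_catenarySlope hm hc hx.le (hx.le.trans hxy))
    intervalIntegrable_const (fun u hu =>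
      antitoneOn_catenarySlope hm hc hx (hx.trans_le hu.1) hu.1)
  rw [lam_sub_lam hn hc hx.le (hx.le.trans hxy)]
  simpa using hmono

lemma exists_lam_lt_lam {n : ℕ} (hn : 2 ≤ n) {a b : ℝ} (ha : 0 < a) (hab : a < b) :
    ∃ R, b ≤ R ∧ lam n a R < lam n b R := by
  have hm : n - 1 ≠ 0 := by omega
  have hb : 0 < b := ha.trans hab
  set δ := lam n b (b + 1) - lam n a (a + 1)
  have hgap := strictMonoOn_lam_add_sub_lam_add hn ha hab
  have hδ : 0 < δ := by
    simpa [δ] using hgap self_mem_Ici (mem_Ici.2 zero_le_one) zero_lt_one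
  have hsmall : ∀ᶠ ρ in atTop, (b - a) * catenarySlope (n - 1) b ρ < δ := by
    have := (tendsto_catenarySlope_atTop hm hb).const_mul (b - a)
    rw [mul_zero] at this
    exact this.eventually (gt_mem_nhds hδ)
  obtain ⟨ρ, hρsmall, hρa, hρb⟩ :=
    (hsmall.and ((eventually_ge_atTop (a + 1)).and (eventually_gt_atTop b))).exists
  refine ⟨ρ, hρb.le, ?_⟩
  have hL := hgap.monotoneOn (mem_Ici.2 zero_le_one) (mem_Ici.2 (by linarith : 0 ≤ ρ - a))
    (by linarith : 1 ≤ ρ - a)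
  have htail := lam_sub_lam_le hn hb hρb (by linarith : ρ ≤ b + (ρ - a))
  simp only [add_sub_cancel] at hL
  rw [show b + (ρ - a) - ρ = b - a by ring] at htail
  linarith

lemma StrictAntiOn.exists_sign_change_Ici {f : ℝ → ℝ} {b R : ℝ}
    (hf : StrictAntiOn f (Ici b)) (hcont : ContinuousOn f (Ici b)) (hb : 0 < f b) (hbR : b ≤ R)
    (hR : f R < 0) :
    ∃ ρ₀, b < ρ₀ ∧ f ρ₀ = 0 ∧ (∀ ρ, b < ρ → f ρ = 0 → ρ = ρ₀) ∧
      (∀ ρ ∈ Ioo b ρ₀, 0 < f ρ) ∧ (∀ ρ ∈ Ioi ρ₀, f ρ < 0) := by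
  obtain ⟨ρ₀, hρ₀, hzero⟩ :=
    intermediate_value_Ioo' hbR (hcont.mono Icc_subset_Ici_self) ⟨hR, hb⟩
  have hρ₀b : ρ₀ ∈ Ici b := hρ₀.1.le
  refine ⟨ρ₀, hρ₀.1, hzero, fun ρ hρ h => hf.injOn hρ.le hρ₀b (h.trans hzero.symm),
    fun ρ hρ => hzero ▸ hf hρ.1.le hρ₀b hρ.2,
    fun ρ hρ => hzero ▸ hf hρ₀b (hρ₀.1.trans hρ).le hρ⟩

/-- for `0 < a < b` there is a unique `ρ₀ ∈ (b, ∞)` with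
`λ(a, ρ₀) = λ(b, ρ₀)`; moreover `λ(a, ρ) > λ(b, ρ)` on `(b, ρ₀)` and
`λ(a, ρ) < λ(b, ρ)` on `(ρ₀, ∞)` (the catenaries `C_a` and `C_b` meet at exactly two
symmetric points). -/
theorem stmt_11 (n : ℕ) (hn : 2 ≤ n) (a b : ℝ) (ha : 0 < a) (hab : a < b) :
    ∃ ρ₀, b < ρ₀ ∧ lam n a ρ₀ = lam n b ρ₀ ∧
      (∀ ρ, b < ρ → lam n a ρ = lam n b ρ → ρ = ρ₀) ∧
      (∀ ρ ∈ Set.Ioo b ρ₀, lam n b ρ < lam n a ρ) ∧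
      (∀ ρ ∈ Set.Ioi ρ₀, lam n a ρ < lam n b ρ) := by
  have hb : 0 < b := ha.trans hab
  have hcont : ContinuousOn (fun ρ => lam n a ρ - lam n b ρ) (Ici b) :=
    ((continuousOn_lam hn ha).mono (Ici_subset_Ici.2 hab.le)).sub (continuousOn_lam hn hb)
  have hpos : 0 < lam n a b - lam n b b := by
    simpa using strictMonoOn_lam hn ha self_mem_Ici (mem_Ici.2 hab.le) hab
  obtain ⟨R, hbR, hR⟩ := exists_lam_lt_lam hn ha hab
  obtain ⟨ρ₀, hbρ₀, hzero, huniq, hbefore, hafter⟩ :=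
    (strictAntiOn_lam_sub_lam hn ha hab).exists_sign_change_Ici hcont hpos hbR (sub_neg.2 hR)
  exact ⟨ρ₀, hbρ₀, sub_eq_zero.1 hzero, fun ρ hρ h => huniq ρ hρ (sub_eq_zero.2 h),
    fun ρ hρ => sub_pos.1 (hbefore ρ hρ), fun ρ hρ => sub_neg.1 (hafter ρ hρ)⟩
end

section
/- For every integer n ≥ 2 and every a > 0, the improper integral ∫_a^∞ ( sinh^{n−1}(a)·cosh(ρ) / sinh^n(ρ) )^n · sinh^{2n−2}(ρ) · (sinh^{2n−2}(ρ) − sinh^{2n−2}(a))^{−1/2} dρ is finite. (Up to the constant factor 2·(n(n−1))^{n/2}·Vol(S^{n−1}), this is the total extrinsic curvature ∫_{C_a} |A_a|^n dμ_a of the catenoid C_a, which is therefore finite.) -/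
/-!
With `n = k + 1` and `t = sinh a / sinh ρ`, the integrand is
`sinh^k a · coth^{k+1} ρ · t^{k²} / √(1 - t^{2k})`. Since `coth` decreases and `t ≤ 1`, it is at
most a constant times `t / √(1 - t) = sinh a / √(sinh ρ (sinh ρ - sinh a))`. Now
`sinh ρ - sinh a ≥ ρ - a` and `sinh ρ ≥ sinh a · cosh (ρ - a) ≥ sinh a · e^{ρ-a} / 2`, so the
integrand is dominated by a multiple of the Gamma-type function `(ρ - a)^{-1/2} e^{-(ρ-a)/2}`,
integrable on `(a, ∞)`.
-/

open MeasureTheory Set Real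

theorem Real.sinh_mul_cosh_sub_le_sinh {a ρ : ℝ} (h : a ≤ ρ) :
    sinh a * cosh (ρ - a) ≤ sinh ρ := by
  have : 0 ≤ cosh a * sinh (ρ - a) :=
    mul_nonneg (cosh_pos a).le (sinh_nonneg_iff.2 (sub_nonneg.2 h))
  calc sinh a * cosh (ρ - a) ≤ sinh (a + (ρ - a)) := by rw [sinh_add]; linarith
    _ = sinh ρ := by rw [add_sub_cancel]

theorem Real.sub_le_sinh_sub_sinh {a ρ : ℝ} (h : a ≤ ρ) : ρ - a ≤ sinh ρ - sinh a := by
  have := sinh_sub_id_strictMono.monotone h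
  linarith

theorem Real.cosh_div_sinh_le_cosh_div_sinh {a ρ : ℝ} (ha : 0 < a) (h : a ≤ ρ) :
    cosh ρ / sinh ρ ≤ cosh a / sinh a := by
  have hsinh : 0 ≤ sinh (ρ - a) := sinh_nonneg_iff.2 (sub_nonneg.2 h)
  rw [div_le_div_iff₀ (sinh_pos_iff.2 (ha.trans_le h)) (sinh_pos_iff.2 ha)]
  rw [sinh_sub] at hsinh
  linarith

theorem Real.half_exp_le_cosh (x : ℝ) : exp x / 2 ≤ cosh x := by
  rw [cosh_eq]; linarith [exp_pos (-x)]

theorem pow_sq_div_sqrt_one_sub_pow_le {k : ℕ} (hk : 1 ≤ k) {t : ℝ} (ht₀ : 0 ≤ t) (ht₁ : t < 1) :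
    t ^ (k ^ 2) / √(1 - t ^ (2 * k)) ≤ t / √(1 - t) := by
  have hpow : ∀ m, 1 ≤ m → t ^ m ≤ t := fun m hm => pow_le_of_le_one ht₀ ht₁.le (by omega)
  have hnum := hpow (k ^ 2) (Nat.one_le_pow _ _ hk)
  have hden := hpow (2 * k) (by omega)
  gcongr

theorem div_div_sqrt_one_sub_div {x y : ℝ} (hx : 0 < x) :
    y / x / √(1 - y / x) = y / √(x * (x - y)) := by
  have : x * (x - y) = x ^ 2 * (1 - y / x) := by field_simp
  rw [this, sqrt_mul (sq_nonneg x), sqrt_sq hx.le, div_div]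

theorem integrableOn_sub_rpow_mul_exp_neg_mul_sub {s b : ℝ} (hs : -1 < s) (hb : 0 < b) (a : ℝ) :
    IntegrableOn (fun x => (x - a) ^ s * exp (-b * (x - a))) (Ioi a) := by
  have h₀ := integrableOn_rpow_mul_exp_neg_mul_rpow hs one_pos hb
  simp only [rpow_one] at h₀
  rwa [← (measurePreserving_sub_right volume a).integrableOn_comp_preimage
    (measurableEmbedding_subRight a), preimage_sub_const_Ioi, zero_add] at h₀

/-- The integrand of the theorem, written with `n = k + 1` so that no exponent needs truncated
subtraction. -/
noncomputable def catenoidCurvatureDensity (k : ℕ) (a ρ : ℝ) : ℝ :=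
  (sinh a ^ k * cosh ρ / sinh ρ ^ (k + 1)) ^ (k + 1) *
    (sinh ρ ^ (2 * k) / √(sinh ρ ^ (2 * k) - sinh a ^ (2 * k)))

theorem catenoidCurvatureDensity_eq (k : ℕ) (a : ℝ) {ρ : ℝ} (hρ : 0 < sinh ρ) :
    catenoidCurvatureDensity k a ρ = sinh a ^ k * (cosh ρ / sinh ρ) ^ (k + 1) *
      ((sinh a / sinh ρ) ^ (k ^ 2) / √(1 - (sinh a / sinh ρ) ^ (2 * k))) := by
  have hsqrt : √(sinh ρ ^ (2 * k) - sinh a ^ (2 * k)) =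
      sinh ρ ^ k * √(1 - (sinh a / sinh ρ) ^ (2 * k)) := by
    rw [← sqrt_sq (pow_nonneg hρ.le k), ← sqrt_mul (sq_nonneg _), div_pow, mul_sub,
      ← pow_mul, mul_comm k 2, mul_div_cancel₀ _ (pow_ne_zero _ hρ.ne'), mul_one]
  rw [catenoidCurvatureDensity, hsqrt]
  generalize √(1 - (sinh a / sinh ρ) ^ (2 * k)) = q
  rw [div_pow, div_pow, div_pow, mul_pow, ← pow_mul, ← pow_mul, mul_div_assoc,
    show (k + 1) * (k + 1) = k ^ 2 + k + (k + 1) by ring, show k * (k + 1) = k + k ^ 2 by ring,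
    show 2 * k = k + k by ring]
  have := hρ.ne'
  field_simp
  ring

theorem div_sqrt_mul_exp_div_two_mul_eq {c u : ℝ} (hc : 0 < c) (hu : 0 < u) :
    c / √(c * (exp u / 2) * u) = √(2 * c) * (u ^ (-(1 / 2) : ℝ) * exp (-(1 / 2) * u)) := by
  rw [rpow_neg hu.le, ← sqrt_eq_rpow, show -(1 / 2) * u = -(u / 2) by ring, exp_neg, exp_half,
    sqrt_mul (by positivity), sqrt_mul (by positivity), sqrt_div (exp_pos u).le,
    sqrt_mul zero_le_two]
  have := sqrt_pos.2 hc
  have := sqrt_pos.2 hu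
  field_simp
  exact (sq_sqrt hc.le).symm

theorem catenoidCurvatureDensity_le {k : ℕ} (hk : 1 ≤ k) {a ρ : ℝ} (ha : 0 < a) (h : a < ρ) :
    catenoidCurvatureDensity k a ρ ≤ sinh a ^ k * (cosh a / sinh a) ^ (k + 1) * √(2 * sinh a) *
      ((ρ - a) ^ (-(1 / 2) : ℝ) * exp (-(1 / 2) * (ρ - a))) := by
  have hsa : 0 < sinh a := sinh_pos_iff.2 ha
  have hsρ : 0 < sinh ρ := sinh_pos_iff.2 (ha.trans h)
  have hlt : sinh a < sinh ρ := sinh_lt_sinh.2 h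
  have hprod : sinh a * (exp (ρ - a) / 2) * (ρ - a) ≤ sinh ρ * (sinh ρ - sinh a) := by
    have hcosh := mul_le_mul_of_nonneg_left (half_exp_le_cosh (ρ - a)) hsa.le
    exact mul_le_mul (hcosh.trans (sinh_mul_cosh_sub_le_sinh h.le)) (sub_le_sinh_sub_sinh h.le)
      (sub_pos.2 h).le hsρ.le
  rw [catenoidCurvatureDensity_eq k a hsρ, mul_assoc _ √_]
  gcongr sinh a ^ k * ?_ ^ (k + 1) * ?_
  · exact cosh_div_sinh_le_cosh_div_sinh ha h.le
  calc (sinh a / sinh ρ) ^ (k ^ 2) / √(1 - (sinh a / sinh ρ) ^ (2 * k))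
      ≤ sinh a / sinh ρ / √(1 - sinh a / sinh ρ) :=
        pow_sq_div_sqrt_one_sub_pow_le hk (by positivity) ((div_lt_one hsρ).2 hlt)
    _ = sinh a / √(sinh ρ * (sinh ρ - sinh a)) := div_div_sqrt_one_sub_div hsρ
    _ ≤ sinh a / √(sinh a * (exp (ρ - a) / 2) * (ρ - a)) := by gcongr
    _ = _ := div_sqrt_mul_exp_div_two_mul_eq hsa (sub_pos.2 h)

theorem integrableOn_catenoidCurvatureDensity {k : ℕ} (hk : 1 ≤ k) {a : ℝ} (ha : 0 < a) :
    IntegrableOn (catenoidCurvatureDensity k a) (Ioi a) := by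
  have hmajorant := (integrableOn_sub_rpow_mul_exp_neg_mul_sub (s := -(1 / 2)) (b := 1 / 2)
    (by norm_num) (by norm_num) a).const_mul
      (sinh a ^ k * (cosh a / sinh a) ^ (k + 1) * √(2 * sinh a))
  have hmeas : Measurable (catenoidCurvatureDensity k a) := by
    unfold catenoidCurvatureDensity; fun_prop
  refine hmajorant.mono' hmeas.aestronglyMeasurable
    ((ae_restrict_iff' measurableSet_Ioi).2 (ae_of_all _ fun ρ hρ => ?_))
  have hsρ : 0 < sinh ρ := sinh_pos_iff.2 (ha.trans hρ)
  rw [norm_of_nonneg (by rw [catenoidCurvatureDensity]; positivity)]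
  exact catenoidCurvatureDensity_le hk ha hρ

/-- the radial density of the total extrinsic curvature `∫_{C_a} |A_a|^n dμ_a`
of the catenoid `C_a ⊂ ℍⁿ × ℝ` is integrable on `(a, ∞)`; hence the total extrinsic
curvature of `C_a` is finite. -/
theorem stmt_12 (n : ℕ) (hn : 2 ≤ n) (a : ℝ) (ha : 0 < a) :
    IntegrableOn
      (fun ρ =>
        (Real.sinh a ^ (n - 1) * Real.cosh ρ / Real.sinh ρ ^ n) ^ n *
          (Real.sinh ρ ^ (2 * n - 2) /
            Real.sqrt (Real.sinh ρ ^ (2 * n - 2) - Real.sinh a ^ (2 * n - 2))))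
      (Set.Ioi a) := by
  obtain ⟨k, rfl⟩ : ∃ k, n = k + 1 := ⟨n - 1, by omega⟩
  -- `k + 1 - 1` and `2 * (k + 1) - 2` reduce to `k` and `2 * k` definitionally
  exact integrableOn_catenoidCurvatureDensity (by omega) ha
end

section
/- For every a > 0, the improper integral ∫_a^∞ [ (sinh²(ρ) − sinh²(a))/sinh²(ρ) + ( sinh(a)·cosh(ρ)/sinh²(ρ) )² ] · sinh²(ρ) · (sinh²(ρ) − sinh²(a))^{−1/2} dρ diverges to +∞. (This is the radial density of ∫ |K_a| dμ_a on the 2-dimensional catenoid C_a ⊂ H² × R, whose Gauss curvature is K_a = −v_a² − |A_a|²/2; hence C_a has infinite total intrinsic curvature.) -/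
set_option maxHeartbeats 1000000

open MeasureTheory

private lemma sinh_sub_ge {x y : ℝ} (h : x ≤ y) : y - x ≤ Real.sinh y - Real.sinh x := by
  have := Real.sinh_sub_id_strictMono.monotone h
  linarith

/-- the radial density of `∫ |K_a| dμ_a` on the `2`-dimensional catenoid
`C_a ⊂ ℍ² × ℝ` (with `K_a = -v_a² - |A_a|²/2`) has divergent integral as `R → ∞`;
hence `C_a` has infinite total intrinsic curvature. -/
theorem stmt_14 (a : ℝ) (ha : 0 < a) :
    Filter.Tendsto
      (fun R => ∫ ρ in a..R,
        ((Real.sinh ρ ^ 2 - Real.sinh a ^ 2) / Real.sinh ρ ^ 2 +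
          (Real.sinh a * Real.cosh ρ / Real.sinh ρ ^ 2) ^ 2) *
          (Real.sinh ρ ^ 2 / Real.sqrt (Real.sinh ρ ^ 2 - Real.sinh a ^ 2)))
      Filter.atTop Filter.atTop := by
  set f : ℝ → ℝ := fun ρ =>
    ((Real.sinh ρ ^ 2 - Real.sinh a ^ 2) / Real.sinh ρ ^ 2 +
      (Real.sinh a * Real.cosh ρ / Real.sinh ρ ^ 2) ^ 2) *
      (Real.sinh ρ ^ 2 / Real.sqrt (Real.sinh ρ ^ 2 - Real.sinh a ^ 2)) with hf
  have hsa : 0 < Real.sinh a := Real.sinh_pos_iff.2 ha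
  have hsa1 : Real.sinh a < Real.sinh (a + 1) := Real.sinh_lt_sinh.2 (by linarith)
  set d : ℝ := Real.sinh (a + 1) ^ 2 - Real.sinh a ^ 2 with hd
  have hdpos : 0 < d := by nlinarith
  -- nonnegativity of f for ρ ≥ a
  have hf_nonneg : ∀ ρ, a ≤ ρ → 0 ≤ f ρ := by
    intro ρ hρ
    have h1 : Real.sinh a ≤ Real.sinh ρ := Real.sinh_le_sinh.2 hρ
    have hS : 0 ≤ Real.sinh ρ ^ 2 - Real.sinh a ^ 2 := by nlinarith
    exact mul_nonneg (add_nonneg (div_nonneg hS (sq_nonneg _)) (sq_nonneg _))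
      (div_nonneg (sq_nonneg _) (Real.sqrt_nonneg _))
  -- integrability of f on [a, a+1]
  have hmeas : Measurable f := by
    apply Measurable.mul
    · exact ((Real.continuous_sinh.measurable.pow_const 2).sub measurable_const).div
        (Real.continuous_sinh.measurable.pow_const 2) |>.add
        ((measurable_const.mul Real.continuous_cosh.measurable).div
          (Real.continuous_sinh.measurable.pow_const 2) |>.pow_const 2)
    · exact (Real.continuous_sinh.measurable.pow_const 2).div
        (((Real.continuous_sinh.measurable.pow_const 2).sub measurable_const).sqrt)
  set C : ℝ := (Real.sinh (a + 1) ^ 2 / Real.sinh a ^ 2 +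
      (Real.sinh a * Real.cosh (a + 1) / Real.sinh a ^ 2) ^ 2) *
      (Real.sinh (a + 1) ^ 2 / Real.sqrt (2 * Real.sinh a)) with hC
  have hC_nonneg : 0 ≤ C := by positivity
  have hInt1 : IntervalIntegrable f volume a (a + 1) := by
    have hg : IntervalIntegrable (fun x : ℝ => C * (x - a) ^ (-(1 : ℝ) / 2)) volume a (a + 1) := by
      have h0 : IntervalIntegrable (fun x : ℝ => x ^ (-(1 : ℝ) / 2)) volume 0 1 :=
        intervalIntegral.intervalIntegrable_rpow' (by norm_num)
      have h1 := (h0.comp_sub_right a).const_mul C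
      simpa [zero_add, add_comm] using h1
    apply hg.mono_fun' (hmeas.aestronglyMeasurable.restrict)
    rw [Set.uIoc_of_le (by linarith : a ≤ a + 1)]
    filter_upwards [ae_restrict_mem measurableSet_Ioc] with ρ hρ
    obtain ⟨hρ1, hρ2⟩ := hρ
    have h1 : Real.sinh a < Real.sinh ρ := Real.sinh_lt_sinh.2 hρ1
    have h2 : Real.sinh ρ ≤ Real.sinh (a + 1) := Real.sinh_le_sinh.2 hρ2
    have h3 : Real.cosh ρ ≤ Real.cosh (a + 1) := by
      rw [Real.cosh_le_cosh]
      rw [abs_of_nonneg (by linarith), abs_of_nonneg (by linarith)]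
      linarith
    set S : ℝ := Real.sinh ρ ^ 2 - Real.sinh a ^ 2 with hS
    have hSpos : 0 < S := by nlinarith
    have hρa : 0 < ρ - a := by linarith
    have hSlow : 2 * Real.sinh a * (ρ - a) ≤ S := by
      have := sinh_sub_ge hρ1.le
      nlinarith
    have hcoshρ : 0 < Real.cosh ρ := Real.cosh_pos ρ
    -- bound A
    have hA : (S / Real.sinh ρ ^ 2 + (Real.sinh a * Real.cosh ρ / Real.sinh ρ ^ 2) ^ 2) ≤
        (Real.sinh (a + 1) ^ 2 / Real.sinh a ^ 2 +
          (Real.sinh a * Real.cosh (a + 1) / Real.sinh a ^ 2) ^ 2) := by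
      have e1 : S / Real.sinh ρ ^ 2 ≤ Real.sinh (a + 1) ^ 2 / Real.sinh a ^ 2 :=
        div_le_div₀ (by positivity) (by nlinarith) (by positivity) (by nlinarith)
      have e2 : Real.sinh a * Real.cosh ρ / Real.sinh ρ ^ 2 ≤
          Real.sinh a * Real.cosh (a + 1) / Real.sinh a ^ 2 :=
        div_le_div₀ (by positivity) (by nlinarith) (by positivity) (by nlinarith)
      have e2' := pow_le_pow_left₀ (by positivity) e2 2
      linarith
    -- bound B
    have hsqrt_low : Real.sqrt (2 * Real.sinh a) * Real.sqrt (ρ - a) ≤ Real.sqrt S := by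
      rw [← Real.sqrt_mul (by positivity)]
      exact Real.sqrt_le_sqrt (by nlinarith)
    have hsqrt_pos : 0 < Real.sqrt (2 * Real.sinh a) * Real.sqrt (ρ - a) := by positivity
    have hB : Real.sinh ρ ^ 2 / Real.sqrt S ≤
        Real.sinh (a + 1) ^ 2 / (Real.sqrt (2 * Real.sinh a) * Real.sqrt (ρ - a)) := by
      gcongr
      nlinarith
    have hfρ : f ρ ≤ C * (ρ - a) ^ (-(1 : ℝ) / 2) := by
      have hrpow : (ρ - a) ^ (-(1 : ℝ) / 2) = (Real.sqrt (ρ - a))⁻¹ := by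
        rw [Real.sqrt_eq_rpow, ← Real.rpow_neg hρa.le]
        norm_num
      have hAB : f ρ ≤ (Real.sinh (a + 1) ^ 2 / Real.sinh a ^ 2 +
          (Real.sinh a * Real.cosh (a + 1) / Real.sinh a ^ 2) ^ 2) *
          (Real.sinh (a + 1) ^ 2 / (Real.sqrt (2 * Real.sinh a) * Real.sqrt (ρ - a))) := by
        simp only [hf]
        exact mul_le_mul hA hB (by positivity) (by positivity)
      calc f ρ ≤ _ := hAB
        _ = C * (ρ - a) ^ (-(1 : ℝ) / 2) := by
            rw [hC, hrpow]
            ring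
    have hnorm : ‖f ρ‖ = f ρ := Real.norm_of_nonneg (hf_nonneg ρ hρ1.le)
    simpa [hnorm] using hfρ
  -- lower bound for the integral
  have key : ∀ R, a + 1 ≤ R → Real.sqrt d * (R - (a + 1)) ≤ ∫ ρ in a..R, f ρ := by
    intro R hR
    have hcont : ContinuousOn f (Set.uIcc (a + 1) R) := by
      rw [Set.uIcc_of_le hR]
      intro ρ hρ
      obtain ⟨hρ1, _⟩ := hρ
      have h1 : Real.sinh a < Real.sinh ρ := Real.sinh_lt_sinh.2 (by linarith)
      have hsρ : 0 < Real.sinh ρ := by linarith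
      have hS : 0 < Real.sinh ρ ^ 2 - Real.sinh a ^ 2 := by nlinarith
      have hsqrt : Real.sqrt (Real.sinh ρ ^ 2 - Real.sinh a ^ 2) ≠ 0 := by positivity
      apply ContinuousAt.continuousWithinAt
      apply ContinuousAt.mul
      · apply ContinuousAt.add
        · exact ContinuousAt.div (by fun_prop) (by fun_prop) (by positivity)
        · exact (ContinuousAt.div (by fun_prop) (by fun_prop) (by positivity)).pow 2
      · exact ContinuousAt.div (by fun_prop)
          (Real.continuous_sqrt.continuousAt.comp (by fun_prop)) hsqrt
    have hInt2 : IntervalIntegrable f volume (a + 1) R := hcont.intervalIntegrable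
    have hlow : ∀ ρ ∈ Set.Icc (a + 1) R, Real.sqrt d ≤ f ρ := by
      intro ρ hρ
      obtain ⟨hρ1, _⟩ := hρ
      have h1 : Real.sinh a < Real.sinh ρ := Real.sinh_lt_sinh.2 (by linarith)
      have h2 : Real.sinh (a + 1) ≤ Real.sinh ρ := Real.sinh_le_sinh.2 hρ1
      have hsρ : 0 < Real.sinh ρ := by linarith
      set S : ℝ := Real.sinh ρ ^ 2 - Real.sinh a ^ 2 with hS
      have hSpos : 0 < S := by nlinarith
      have hdS : d ≤ S := by rw [hd, hS]; nlinarith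
      have step1 : Real.sqrt d ≤ Real.sqrt S := Real.sqrt_le_sqrt hdS
      have step2 : Real.sqrt S = (S / Real.sinh ρ ^ 2) * (Real.sinh ρ ^ 2 / Real.sqrt S) := by
        rw [div_mul_div_comm, mul_comm S, mul_div_mul_left _ _ (by positivity : Real.sinh ρ ^ 2 ≠ 0)]
        exact (Real.div_sqrt).symm
      have step3 : (S / Real.sinh ρ ^ 2) * (Real.sinh ρ ^ 2 / Real.sqrt S) ≤ f ρ := by
        simp only [hf]
        apply mul_le_mul_of_nonneg_right _ (by positivity)
        simp only [← hS]
        nlinarith [sq_nonneg (Real.sinh a * Real.cosh ρ / Real.sinh ρ ^ 2)]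
      calc Real.sqrt d ≤ Real.sqrt S := step1
        _ = _ := step2
        _ ≤ f ρ := step3
    have hsplit : (∫ ρ in a..(a+1), f ρ) + (∫ ρ in (a+1)..R, f ρ) = ∫ ρ in a..R, f ρ :=
      intervalIntegral.integral_add_adjacent_intervals hInt1 hInt2
    have h01 : 0 ≤ ∫ ρ in a..(a+1), f ρ :=
      intervalIntegral.integral_nonneg (by linarith) (fun u hu => hf_nonneg u hu.1)
    have h02 : Real.sqrt d * (R - (a + 1)) ≤ ∫ ρ in (a+1)..R, f ρ := by
      have := intervalIntegral.integral_mono_on hR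
        (intervalIntegrable_const (c := Real.sqrt d)) hInt2 hlow
      simpa [intervalIntegral.integral_const, smul_eq_mul, mul_comm] using this
    linarith
  -- conclude
  have hg : Filter.Tendsto (fun R => Real.sqrt d * (R - (a + 1))) Filter.atTop Filter.atTop := by
    apply Filter.Tendsto.const_mul_atTop (Real.sqrt_pos.2 hdpos)
    simpa [sub_eq_add_neg] using
      Filter.tendsto_atTop_add_const_right Filter.atTop (-(a + 1)) Filter.tendsto_id
  apply Filter.tendsto_atTop_mono' _ _ hg
  filter_upwards [Filter.eventually_ge_atTop (a + 1)] with R hR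
  exact key R hR
end

section
/- Let n ≥ 2 be an integer and a > 0. Then for every ρ ≥ a, the change of variables cosh(r) = cosh(a)·t gives cosh^{n−1}(a) · ∫_a^ρ (cosh^{2n−2}(r) − cosh^{2n−2}(a))^{−1/2} dr = cosh(a) · ∫_1^{cosh(ρ)/cosh(a)} (t^{2n−2} − 1)^{−1/2} · (cosh²(a)·t² − 1)^{−1/2} dt, both improper integrals converging at their lower endpoints; moreover the limit as ρ → ∞ is finite, i.e. h_T(a) = 2·cosh(a) · ∫_1^∞ (t^{2n−2} − 1)^{−1/2} · (cosh²(a)·t² − 1)^{−1/2} dt < ∞. -/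
open MeasureTheory

open Real Set

lemma key_lb {n : ℕ} (hn : 2 ≤ n) {a x : ℝ} (ha : 0 < a) (hx : a ≤ x) :
    Real.sinh a * (x - a) ≤ Real.cosh x ^ (2 * n - 2) - Real.cosh a ^ (2 * n - 2) := by
  have h2 : 2 * n - 2 = 2 * (n - 1) := by omega
  rw [h2, pow_mul, pow_mul]
  set X := Real.cosh x ^ 2 with hX
  set Y := Real.cosh a ^ 2 with hY
  have hca : 1 ≤ Real.cosh a := Real.one_le_cosh a
  have hcx : Real.cosh a ≤ Real.cosh x := by
    rw [Real.cosh_le_cosh, abs_of_pos ha, abs_of_pos (lt_of_lt_of_le ha hx)]; exact hx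
  have hY1 : 1 ≤ Y := by nlinarith
  have hXY : Y ≤ X := by nlinarith
  have hsa : 0 < Real.sinh a := Real.sinh_pos_iff.2 ha
  have hsx : Real.sinh a ≤ Real.sinh x := Real.sinh_le_sinh.2 hx
  have hsub : x - a ≤ Real.sinh x - Real.sinh a := by
    have := Real.sinh_sub_id_strictMono.monotone hx
    linarith
  have hstep1 : X - Y ≤ X ^ (n - 1) - Y ^ (n - 1) := by
    have hk : n - 1 = (n - 2) + 1 := by omega
    rw [hk, pow_succ, pow_succ]
    have hYp : (1:ℝ) ≤ Y ^ (n - 2) := one_le_pow₀ hY1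
    have hXp : Y ^ (n - 2) ≤ X ^ (n - 2) := pow_le_pow_left₀ (by linarith) hXY _
    nlinarith [pow_nonneg (le_trans zero_le_one hY1 : (0:ℝ) ≤ Y) (n-2)]
  have hstep2 : Real.sinh a * (x - a) ≤ X - Y := by
    have hXs : X = Real.sinh x ^ 2 + 1 := by rw [hX, Real.cosh_sq]
    have hYs : Y = Real.sinh a ^ 2 + 1 := by rw [hY, Real.cosh_sq]
    rw [hXs, hYs]
    nlinarith
  linarith

lemma intF {n : ℕ} (hn : 2 ≤ n) {a ρ : ℝ} (ha : 0 < a) (hρ : a ≤ ρ) :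
    IntegrableOn
      (fun r => 1 / Real.sqrt (Real.cosh r ^ (2 * n - 2) - Real.cosh a ^ (2 * n - 2)))
      (Set.Ioc a ρ) := by
  have hsa : 0 < Real.sinh a := Real.sinh_pos_iff.2 ha
  have hbase : IntervalIntegrable (fun x : ℝ => x ^ (-(1/2) : ℝ)) volume 0 (ρ - a) :=
    intervalIntegral.intervalIntegrable_rpow' (by norm_num)
  have hshift : IntervalIntegrable (fun x : ℝ => (x - a) ^ (-(1/2) : ℝ)) volume a ρ := by
    simpa using hbase.comp_sub_right a
  have hbnd : IntegrableOn
      (fun x => (Real.sqrt (Real.sinh a))⁻¹ * (x - a) ^ (-(1/2) : ℝ)) (Set.Ioc a ρ) :=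
    (intervalIntegrable_iff_integrableOn_Ioc_of_le hρ).1 (hshift.const_mul _)
  refine hbnd.mono' ?_ ?_
  · exact (by fun_prop : Measurable fun r =>
      1 / Real.sqrt (Real.cosh r ^ (2 * n - 2) - Real.cosh a ^ (2 * n - 2))).aestronglyMeasurable
  · rw [ae_restrict_iff' measurableSet_Ioc]
    filter_upwards with x hx
    obtain ⟨hx1, hx2⟩ := hx
    have hkey := key_lb hn ha hx1.le
    have hpos : 0 < Real.sinh a * (x - a) := by nlinarith
    have h1 : Real.sqrt (Real.sinh a * (x - a)) ≤
        Real.sqrt (Real.cosh x ^ (2 * n - 2) - Real.cosh a ^ (2 * n - 2)) :=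
      Real.sqrt_le_sqrt hkey
    have h2 : 0 < Real.sqrt (Real.sinh a * (x - a)) := Real.sqrt_pos.2 hpos
    have hnorm : ‖1 / Real.sqrt (Real.cosh x ^ (2 * n - 2) - Real.cosh a ^ (2 * n - 2))‖ =
        1 / Real.sqrt (Real.cosh x ^ (2 * n - 2) - Real.cosh a ^ (2 * n - 2)) := by
      rw [Real.norm_eq_abs, abs_of_nonneg]; positivity
    rw [hnorm]
    calc 1 / Real.sqrt (Real.cosh x ^ (2 * n - 2) - Real.cosh a ^ (2 * n - 2))
        ≤ 1 / Real.sqrt (Real.sinh a * (x - a)) := one_div_le_one_div_of_le h2 h1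
      _ = (Real.sqrt (Real.sinh a))⁻¹ * (x - a) ^ (-(1/2) : ℝ) := by
          rw [Real.sqrt_mul hsa.le, Real.rpow_neg (by linarith), ← Real.sqrt_eq_rpow,
            one_div, mul_inv]

lemma pointwise_id {n : ℕ} (hn : 2 ≤ n) {a x : ℝ} (ha : 0 < a) (hx : a < x) :
    |Real.sinh x / Real.cosh a| *
      (1 / (Real.sqrt ((Real.cosh x / Real.cosh a) ^ (2 * n - 2) - 1) *
        Real.sqrt (Real.cosh a ^ 2 * (Real.cosh x / Real.cosh a) ^ 2 - 1))) =
    Real.cosh a ^ (n - 2) *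
      (1 / Real.sqrt (Real.cosh x ^ (2 * n - 2) - Real.cosh a ^ (2 * n - 2))) := by
  have hc : 0 < Real.cosh a := Real.cosh_pos a
  have hsx : 0 < Real.sinh x := Real.sinh_pos_iff.2 (ha.trans hx)
  have hsa : 0 < Real.sinh a := Real.sinh_pos_iff.2 ha
  have hD : 0 < Real.cosh x ^ (2 * n - 2) - Real.cosh a ^ (2 * n - 2) := by
    have := key_lb hn ha hx.le; nlinarith
  set D := Real.cosh x ^ (2 * n - 2) - Real.cosh a ^ (2 * n - 2) with hDdef
  have hcpow : Real.cosh a ^ (2 * n - 2) = (Real.cosh a ^ (n - 1)) ^ 2 := by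
    rw [← pow_mul]; congr 1; omega
  have h1 : (Real.cosh x / Real.cosh a) ^ (2 * n - 2) - 1 =
      D / Real.cosh a ^ (2 * n - 2) := by
    rw [div_pow, hDdef]; field_simp
  have h1' : Real.sqrt ((Real.cosh x / Real.cosh a) ^ (2 * n - 2) - 1) =
      Real.sqrt D / Real.cosh a ^ (n - 1) := by
    rw [h1, Real.sqrt_div hD.le, hcpow, Real.sqrt_sq (by positivity)]
  have h2 : Real.cosh a ^ 2 * (Real.cosh x / Real.cosh a) ^ 2 - 1 = Real.sinh x ^ 2 := by
    rw [div_pow]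
    have h := Real.cosh_sq x
    field_simp
    linarith
  have h2' : Real.sqrt (Real.cosh a ^ 2 * (Real.cosh x / Real.cosh a) ^ 2 - 1) =
      Real.sinh x := by rw [h2, Real.sqrt_sq hsx.le]
  rw [h1', h2', abs_of_pos (by positivity)]
  have hsD : 0 < Real.sqrt D := Real.sqrt_pos.2 hD
  have hpow : Real.cosh a ^ (n - 1) = Real.cosh a * Real.cosh a ^ (n - 2) := by
    rw [← pow_succ']; congr 1; omega
  rw [hpow]
  field_simp

lemma cov {n : ℕ} (hn : 2 ≤ n) {a ρ : ℝ} (ha : 0 < a) (hρ : a ≤ ρ) :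
    IntegrableOn
        (fun t => 1 / (Real.sqrt (t ^ (2 * n - 2) - 1) *
          Real.sqrt (Real.cosh a ^ 2 * t ^ 2 - 1)))
        (Set.Ioc 1 (Real.cosh ρ / Real.cosh a)) ∧
      Real.cosh a ^ (n - 1) *
          ∫ r in a..ρ,
            1 / Real.sqrt (Real.cosh r ^ (2 * n - 2) - Real.cosh a ^ (2 * n - 2)) =
        Real.cosh a *
          ∫ t in (1 : ℝ)..(Real.cosh ρ / Real.cosh a),
            1 / (Real.sqrt (t ^ (2 * n - 2) - 1) *
              Real.sqrt (Real.cosh a ^ 2 * t ^ 2 - 1)) := by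
  have hc : 0 < Real.cosh a := Real.cosh_pos a
  rcases eq_or_lt_of_le hρ with rfl | hlt
  · rw [div_self hc.ne']
    simp [intervalIntegral.integral_same]
  set g : ℝ → ℝ := fun t => 1 / (Real.sqrt (t ^ (2 * n - 2) - 1) *
      Real.sqrt (Real.cosh a ^ 2 * t ^ 2 - 1)) with hg
  set φ : ℝ → ℝ := fun r => Real.cosh r / Real.cosh a with hφ
  have hφlt : ∀ x y : ℝ, a ≤ x → x < y → φ x < φ y := by
    intro x y hx hxy
    have hcc : Real.cosh x < Real.cosh y := by
      rw [Real.cosh_lt_cosh, abs_of_pos (ha.trans_le hx),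
        abs_of_pos (ha.trans_le (hx.trans hxy.le))]
      exact hxy
    exact div_lt_div_of_pos_right hcc hc
  have hs : MeasurableSet (Set.Ioc a ρ) := measurableSet_Ioc
  have hderiv : ∀ r ∈ Set.Ioc a ρ,
      HasDerivWithinAt φ (Real.sinh r / Real.cosh a) (Set.Ioc a ρ) r := fun r _ =>
    ((Real.hasDerivAt_cosh r).div_const _).hasDerivWithinAt
  have hinj : Set.InjOn φ (Set.Ioc a ρ) := by
    have : StrictMonoOn φ (Set.Ioc a ρ) := fun x hx y hy h => hφlt x y hx.1.le h
    exact this.injOn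
  have hφa : φ a = 1 := div_self hc.ne'
  have himg : φ '' Set.Ioc a ρ = Set.Ioc 1 (Real.cosh ρ / Real.cosh a) := by
    apply Set.Subset.antisymm
    · rintro _ ⟨r, hr, rfl⟩
      refine ⟨by rw [← hφa]; exact hφlt a r le_rfl hr.1, ?_⟩
      rcases eq_or_lt_of_le hr.2 with rfl | h
      · exact le_rfl
      · exact (hφlt r ρ hr.1.le h).le
    · have hcont : ContinuousOn φ (Set.Icc a ρ) :=
        (Real.continuous_cosh.div_const (Real.cosh a)).continuousOn
      have h := intermediate_value_Ioc hρ hcont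
      rwa [hφa] at h
  have heq : Set.EqOn (fun x => |Real.sinh x / Real.cosh a| • g (φ x))
      (fun x => Real.cosh a ^ (n - 2) *
        (1 / Real.sqrt (Real.cosh x ^ (2 * n - 2) - Real.cosh a ^ (2 * n - 2))))
      (Set.Ioc a ρ) := by
    intro x hx
    simp only [smul_eq_mul, hg, hφ]
    exact pointwise_id hn ha hx.1
  constructor
  · rw [← himg, MeasureTheory.integrableOn_image_iff_integrableOn_abs_deriv_smul hs hderiv hinj]
    exact MeasureTheory.IntegrableOn.congr_fun
      ((intF hn ha hρ).const_mul (Real.cosh a ^ (n - 2)))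
      (fun x hx => (heq hx).symm) hs
  · have h1le : 1 ≤ Real.cosh ρ / Real.cosh a := by
      rw [← hφa]
      exact (hφlt a ρ le_rfl hlt).le
    rw [intervalIntegral.integral_of_le hρ, intervalIntegral.integral_of_le h1le, ← himg,
      MeasureTheory.integral_image_eq_integral_abs_deriv_smul hs hderiv hinj,
      MeasureTheory.setIntegral_congr_fun hs heq, MeasureTheory.integral_const_mul,
      ← mul_assoc]
    congr 1
    rw [← pow_succ']
    congr 1
    omega

lemma tail_int {n : ℕ} (hn : 2 ≤ n) {a : ℝ} (ha : 0 < a) :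
    IntegrableOn
      (fun t => 1 / (Real.sqrt (t ^ (2 * n - 2) - 1) *
        Real.sqrt (Real.cosh a ^ 2 * t ^ 2 - 1)))
      (Set.Ioi 1) := by
  have hc : 0 < Real.cosh a := Real.cosh_pos a
  set X := Real.cosh (a + 2) / Real.cosh a with hXdef
  have hexp2 : (4 : ℝ) ≤ Real.exp 2 := by
    have h1 : (2 : ℝ) ≤ Real.exp 1 := by
      have := Real.add_one_le_exp (1 : ℝ); linarith
    have : Real.exp 2 = Real.exp 1 * Real.exp 1 := by
      rw [← Real.exp_add]; norm_num
    nlinarith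
  have hcosh2 : (2 : ℝ) ≤ Real.cosh 2 := by
    rw [Real.cosh_eq]
    have := Real.exp_pos (-2 : ℝ)
    linarith
  have hX2 : (2 : ℝ) ≤ X := by
    rw [hXdef, le_div_iff₀ hc]
    rw [Real.cosh_add]
    have hsa : 0 ≤ Real.sinh a := (Real.sinh_pos_iff.2 ha).le
    have hs2 : 0 ≤ Real.sinh 2 := by positivity
    nlinarith
  have h1 : IntegrableOn
      (fun t => 1 / (Real.sqrt (t ^ (2 * n - 2) - 1) *
        Real.sqrt (Real.cosh a ^ 2 * t ^ 2 - 1))) (Set.Ioc 1 X) :=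
    (cov hn ha (by linarith : a ≤ a + 2)).1
  have hXpos : (0 : ℝ) < X := by linarith
  have h2 : IntegrableOn
      (fun t => 1 / (Real.sqrt (t ^ (2 * n - 2) - 1) *
        Real.sqrt (Real.cosh a ^ 2 * t ^ 2 - 1))) (Set.Ioi X) := by
    refine ((integrableOn_Ioi_rpow_of_lt (by norm_num : (-2 : ℝ) < -1) hXpos).const_mul
      2).mono' ?_ ?_
    · exact (by fun_prop : Measurable fun t : ℝ => 1 / (Real.sqrt (t ^ (2 * n - 2) - 1) *
        Real.sqrt (Real.cosh a ^ 2 * t ^ 2 - 1))).aestronglyMeasurable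
    · rw [ae_restrict_iff' measurableSet_Ioi]
      filter_upwards with x hx
      have hx2 : (2 : ℝ) ≤ x := le_of_lt (lt_of_le_of_lt hX2 hx)
      have hx1 : (1 : ℝ) ≤ x := by linarith
      have hx0 : (0 : ℝ) < x := by linarith
      have hm : 2 ≤ 2 * n - 2 := by omega
      have hpow : x ^ 2 ≤ x ^ (2 * n - 2) := pow_le_pow_right₀ hx1 hm
      have hb1 : x ^ 2 / 2 ≤ x ^ (2 * n - 2) - 1 := by nlinarith
      have hb2 : x ^ 2 / 2 ≤ Real.cosh a ^ 2 * x ^ 2 - 1 := by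
        have h1c : (1 : ℝ) ≤ Real.cosh a ^ 2 := one_le_pow₀ (Real.one_le_cosh a)
        have h2c : 1 * x ^ 2 ≤ Real.cosh a ^ 2 * x ^ 2 :=
          mul_le_mul_of_nonneg_right h1c (sq_nonneg x)
        nlinarith
      have hprod : x ^ 2 / 2 ≤ Real.sqrt (x ^ (2 * n - 2) - 1) *
          Real.sqrt (Real.cosh a ^ 2 * x ^ 2 - 1) := by
        calc x ^ 2 / 2 = Real.sqrt (x ^ 2 / 2) * Real.sqrt (x ^ 2 / 2) :=
              (Real.mul_self_sqrt (by positivity)).symm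
          _ ≤ _ := mul_le_mul (Real.sqrt_le_sqrt hb1) (Real.sqrt_le_sqrt hb2)
              (Real.sqrt_nonneg _) (Real.sqrt_nonneg _)
      have hnorm : ‖1 / (Real.sqrt (x ^ (2 * n - 2) - 1) *
          Real.sqrt (Real.cosh a ^ 2 * x ^ 2 - 1))‖ =
          1 / (Real.sqrt (x ^ (2 * n - 2) - 1) *
          Real.sqrt (Real.cosh a ^ 2 * x ^ 2 - 1)) := by
        rw [Real.norm_eq_abs, abs_of_nonneg]; positivity
      rw [hnorm]
      have hrw : x ^ (-2 : ℝ) = (x ^ 2)⁻¹ := by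
        rw [show (-2 : ℝ) = -((2 : ℕ) : ℝ) by norm_num, Real.rpow_neg hx0.le,
          Real.rpow_natCast]
      calc 1 / (Real.sqrt (x ^ (2 * n - 2) - 1) * Real.sqrt (Real.cosh a ^ 2 * x ^ 2 - 1))
          ≤ 1 / (x ^ 2 / 2) := one_div_le_one_div_of_le (by positivity) hprod
        _ = 2 * x ^ (-2 : ℝ) := by rw [hrw]; field_simp
  rw [← Set.Ioc_union_Ioi_eq_Ioi (le_trans one_le_two hX2)]
  exact h1.union h2

/-- for the translation-invariant hypersurfaces (`d = cosh^{n-1}(a) > 1`),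
the change of variables `cosh r = cosh(a) t` gives
`cosh^{n-1}(a) ∫_a^ρ (cosh^{2n-2}(r) - cosh^{2n-2}(a))^{-1/2} dr
  = cosh(a) ∫_1^{cosh ρ / cosh a} (t^{2n-2}-1)^{-1/2} (cosh²(a)t²-1)^{-1/2} dt`,
both improper integrals converging at their lower endpoints; moreover the limit as
`ρ → ∞` is finite, i.e. the full integrand is integrable on `(1, ∞)`, so
`h_T(a) = 2 cosh(a) ∫_1^∞ (t^{2n-2}-1)^{-1/2} (cosh²(a)t²-1)^{-1/2} dt < ∞`. -/
theorem stmt_16 (n : ℕ) (hn : 2 ≤ n) (a : ℝ) (ha : 0 < a) :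
    (∀ ρ ≥ a,
      IntegrableOn
        (fun r => 1 / Real.sqrt (Real.cosh r ^ (2 * n - 2) - Real.cosh a ^ (2 * n - 2)))
        (Set.Ioc a ρ) ∧
      IntegrableOn
        (fun t => 1 / (Real.sqrt (t ^ (2 * n - 2) - 1) *
          Real.sqrt (Real.cosh a ^ 2 * t ^ 2 - 1)))
        (Set.Ioc 1 (Real.cosh ρ / Real.cosh a)) ∧
      Real.cosh a ^ (n - 1) *
          ∫ r in a..ρ,
            1 / Real.sqrt (Real.cosh r ^ (2 * n - 2) - Real.cosh a ^ (2 * n - 2)) =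
        Real.cosh a *
          ∫ t in (1 : ℝ)..(Real.cosh ρ / Real.cosh a),
            1 / (Real.sqrt (t ^ (2 * n - 2) - 1) *
              Real.sqrt (Real.cosh a ^ 2 * t ^ 2 - 1))) ∧
    IntegrableOn
      (fun t => 1 / (Real.sqrt (t ^ (2 * n - 2) - 1) *
        Real.sqrt (Real.cosh a ^ 2 * t ^ 2 - 1)))
      (Set.Ioi 1) := by
  exact ⟨fun ρ hρ => ⟨intF hn ha hρ, (cov hn ha hρ).1, (cov hn ha hρ).2⟩, tail_int hn ha⟩
end
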